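/- arXiv:1412.1187 — 10 statements merged into one kernel-verified Lean document; each statement's English description precedes it below -/
import Mathlib

section
/- Let A be an n×n symmetric quasi-Cartan matrix and let s ≠ r be indices. Then T_{s,r}(T_{s,r}A) = A; that is, applying the transformation T_{s,r} twice in succession returns the original matrix. -/
/-! Since `A s s = 2`, the first `T_{s,r}` flips the sign of the `(s, r)` entry, so the second one
conjugates by `M^{A_{s,r}}`, which is inverse to `M^{-A_{s,r}}` because `e_s e_rᵀ` squares to zero
when `s ≠ r`. -/

open Matrix

/-- `M_{s,r}^σ = I + σ·e_s·e_rᵀ`. -/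
def Msr {V : Type*} [Fintype V] [DecidableEq V] (σ : ℤ) (s r : V) : Matrix V V ℤ :=
  1 + Matrix.single s r σ

/-- `T_{s,r} A = (M_{s,r}^{-A_{s,r}})ᵀ · A · M_{s,r}^{-A_{s,r}}`. -/
def Tsr {V : Type*} [Fintype V] [DecidableEq V] (s r : V) (A : Matrix V V ℤ) : Matrix V V ℤ :=
  (Msr (-(A s r)) s r)ᵀ * A * Msr (-(A s r)) s r

section

variable {V : Type*} [Fintype V] [DecidableEq V] {s r : V}

theorem Msr_zero (s r : V) : Msr 0 s r = 1 := by
  simp [Msr]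

theorem Msr_mul_Msr (hsr : s ≠ r) (σ τ : ℤ) : Msr σ s r * Msr τ s r = Msr (σ + τ) s r := by
  simp only [Msr, add_mul, mul_add, one_mul, mul_one,
    single_mul_single_of_ne (c := σ) s r s hsr.symm τ, add_zero, single_add]
  abel

theorem Msr_conj_Msr_neg (hsr : s ≠ r) (σ : ℤ) (B : Matrix V V ℤ) :
    (Msr σ s r)ᵀ * ((Msr (-σ) s r)ᵀ * B * Msr (-σ) s r) * Msr σ s r = B := by
  rw [← mul_assoc, ← mul_assoc, ← transpose_mul, Msr_mul_Msr hsr, mul_assoc, Msr_mul_Msr hsr,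
    neg_add_cancel, Msr_zero, transpose_one, one_mul, mul_one]

theorem Tsr_apply_of_ne (hsr : s ≠ r) (A : Matrix V V ℤ) :
    Tsr s r A s r = A s r - A s r * A s s := by
  simp only [Tsr, Msr, transpose_add, transpose_one, transpose_single, add_mul, one_mul, mul_add,
    mul_one, single_mul_mul_single, neg_mul, mul_neg, neg_neg, Matrix.add_apply,
    single_mul_apply_of_ne (h := hsr), add_zero, mul_single_apply_same,
    single_apply_of_row_ne hsr.symm]
  ring

end

theorem stmt3_general (n : ℕ) (A : Matrix (Fin n) (Fin n) ℤ)
    (hdiag : ∀ i, A i i = 2)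
    (s r : Fin n) (hsr : s ≠ r) :
    Tsr s r (Tsr s r A) = A := by
  have h : Tsr s r A s r = -A s r := by
    rw [Tsr_apply_of_ne hsr, hdiag]; ring
  rw [Tsr, h, neg_neg, Tsr]
  exact Msr_conj_Msr_neg hsr _ A

theorem stmt3 (n : ℕ) (A : Matrix (Fin n) (Fin n) ℤ)
    (hsym : A.IsSymm) (hdiag : ∀ i, A i i = 2)
    (s r : Fin n) (hsr : s ≠ r) :
    Tsr s r (Tsr s r A) = A :=
  stmt3_general n A hdiag s r hsr
end

section
/- Every n×n positive definite symmetric quasi-Cartan matrix A is ℤ-equivalent to a symmetric quasi-Cartan matrix B all of whose off-diagonal entries lie in {−1, 0} (i.e., to a symmetric Cartan matrix). -/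
/-!
Call `x` a root of `A` if `q(x) = xᵀ A x = 2`. Over `ℤ`, Cauchy–Schwarz applied to `x` and `adj(A) eₖ`
gives `det(A)² xₖ² ≤ 2 · q(adj(A) eₖ)`, so a positive definite `A` has finitely many roots, and
there is a positive integer vector `ρ` (powers of a suitable integer) vanishing on none of them.
Now run a descent on pairs `(B, ρ)` with `B` ℤ-equivalent to `A`, where `ρ` is positive on the
basis vectors and nonzero on the roots of `B`. Positivity of `q(eᵢ ± eⱼ) = 4 ± 2 Bᵢⱼ` forces
`|Bᵢⱼ| ≤ 1`. If some `Bᵢⱼ = 1`, then `eᵢ - eⱼ` is a root, so `ρᵢ ≠ ρⱼ`; say `ρᵢ < ρⱼ`. Changing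
basis by `eⱼ ↦ eⱼ - eᵢ` keeps the diagonal equal to `2` and lowers `∑ ρ` by `ρᵢ > 0`, so the
descent ends at a matrix whose off-diagonal entries all lie in `{-1, 0}`.
-/

open Matrix

/-- `A` and `A'` are ℤ-equivalent: `A' = Mᵀ·A·M` for some `M` invertible over ℤ. -/
def ZEquiv {V : Type*} [Fintype V] [DecidableEq V] (A A' : Matrix V V ℤ) : Prop :=
  ∃ M N : Matrix V V ℤ, M * N = 1 ∧ N * M = 1 ∧ A' = Mᵀ * A * M

/-- `A` is positive definite: `xᵀ·A·x > 0` for every nonzero integer vector `x`. -/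
def PosDefInt {V : Type*} [Fintype V] (A : Matrix V V ℤ) : Prop :=
  ∀ x : V → ℤ, x ≠ 0 → 0 < x ⬝ᵥ (A *ᵥ x)

theorem Matrix.transpose_transvection {V R : Type*} [DecidableEq V] [CommRing R] (i j : V)
    (c : R) : (transvection i j c)ᵀ = transvection j i c := by
  simp [transvection, transpose_add]

section

variable {V : Type*} [Fintype V]

theorem dotProduct_transpose_mul_mul_mulVec {R : Type*} [CommSemiring R] (A M : Matrix V V R)
    (x y : V → R) : x ⬝ᵥ ((Mᵀ * A * M) *ᵥ y) = (M *ᵥ x) ⬝ᵥ (A *ᵥ (M *ᵥ y)) := by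
  rw [← mulVec_mulVec, ← mulVec_mulVec, dotProduct_mulVec, vecMul_transpose]

theorem single_one_dotProduct_mulVec_single_one {R : Type*} [Semiring R] [DecidableEq V]
    (A : Matrix V V R) (i j : V) : Pi.single i 1 ⬝ᵥ (A *ᵥ Pi.single j 1) = A i j := by
  simp

theorem Matrix.IsSymm.dotProduct_mulVec_comm {R : Type*} [CommSemiring R] {A : Matrix V V R}
    (hA : A.IsSymm) (x y : V → R) : x ⬝ᵥ (A *ᵥ y) = y ⬝ᵥ (A *ᵥ x) := by
  rw [dotProduct_mulVec, ← mulVec_transpose, hA.eq, dotProduct_comm]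

theorem Matrix.IsSymm.transpose_mul_mul {R : Type*} [CommSemiring R] {A : Matrix V V R}
    (hA : A.IsSymm) (M : Matrix V V R) : (Mᵀ * A * M).IsSymm := by
  rw [IsSymm, transpose_mul, transpose_mul, transpose_transpose, hA.eq, Matrix.mul_assoc]

theorem vecMul_transvection {R : Type*} [CommRing R] [DecidableEq V] (ρ : V → R) (i j : V)
    (c : R) : ρ ᵥ* transvection i j c = ρ + Pi.single j (c * ρ i) := by
  ext l
  rw [transvection, vecMul_add, vecMul_one]
  simp [vecMul, dotProduct, single_apply, Pi.single_apply, ite_and, mul_comm, eq_comm]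

theorem PosDefInt.nonneg {A : Matrix V V ℤ} (hA : PosDefInt A) (x : V → ℤ) :
    0 ≤ x ⬝ᵥ (A *ᵥ x) := by
  rcases eq_or_ne x 0 with rfl | hx
  · simp
  · exact (hA x hx).le

theorem PosDefInt.sq_dotProduct_mulVec_le {A : Matrix V V ℤ} (hA : PosDefInt A)
    (hsym : A.IsSymm) (u v : V → ℤ) :
    (u ⬝ᵥ (A *ᵥ v)) ^ 2 ≤ (u ⬝ᵥ (A *ᵥ u)) * (v ⬝ᵥ (A *ᵥ v)) := by
  rcases eq_or_ne u 0 with rfl | hu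
  · simp
  have hqu := hA u hu
  -- with `a = q u` and `b = ⟨u, v⟩`, one has `q (b • u - a • v) = a * (a * q v - b ^ 2)`
  have key := hA.nonneg ((u ⬝ᵥ (A *ᵥ v)) • u - (u ⬝ᵥ (A *ᵥ u)) • v)
  simp only [mulVec_sub, mulVec_smul, dotProduct_sub, sub_dotProduct, dotProduct_smul,
    smul_dotProduct, smul_eq_mul, hsym.dotProduct_mulVec_comm v u] at key
  nlinarith

open Polynomial in
theorem exists_pos_dotProduct_ne_zero (S : Finset (V → ℤ)) (hS : 0 ∉ S) :
    ∃ ρ : V → ℤ, (∀ k, 0 < ρ k) ∧ ∀ x ∈ S, ρ ⬝ᵥ x ≠ 0 := by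
  classical
  let e := Fintype.equivFin V
  -- `ρ = (t ^ e k)ₖ` turns `ρ ⬝ᵥ x` into the value at `t` of a polynomial with coefficients `x`
  let p : (V → ℤ) → ℤ[X] := fun x => ∑ k, C (x k) * X ^ (e k : ℕ)
  have hp : ∀ x ∈ S, p x ≠ 0 := by
    intro x hx hpx
    obtain ⟨k, hk⟩ := Function.ne_iff.mp (ne_of_mem_of_not_mem hx hS)
    apply hk
    simpa [p, finsetSum_coeff, coeff_C_mul_X_pow, Fin.val_inj, e.injective.eq_iff] using
      congrArg (coeff · (e k : ℕ)) hpx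
  have hP : ∏ x ∈ S, p x ≠ 0 := Finset.prod_ne_zero_iff.mpr hp
  obtain ⟨t, ht0, ht⟩ :=
    (Set.Ioi_infinite (0 : ℤ)).exists_notMem_finset (∏ x ∈ S, p x).roots.toFinset
  refine ⟨fun k => t ^ (e k : ℕ), fun k => pow_pos ht0 _, fun x hx h => ht ?_⟩
  rw [Multiset.mem_toFinset, mem_roots hP, IsRoot.def, eval_prod]
  refine Finset.prod_eq_zero hx ?_
  simpa [p, eval_finsetSum, dotProduct, mul_comm] using h

structure IsPosDefQuasiCartan (B : Matrix V V ℤ) : Prop where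
  isSymm : B.IsSymm
  diag : ∀ i, B i i = 2
  posDef : PosDefInt B

variable [DecidableEq V]

theorem ZEquiv.refl (A : Matrix V V ℤ) : ZEquiv A A :=
  ⟨1, 1, Matrix.one_mul 1, Matrix.one_mul 1, by simp⟩

theorem ZEquiv.trans {A B C : Matrix V V ℤ} (hAB : ZEquiv A B) (hBC : ZEquiv B C) :
    ZEquiv A C := by
  obtain ⟨M, N, hMN, hNM, rfl⟩ := hAB
  obtain ⟨M', N', hMN', hNM', rfl⟩ := hBC
  refine ⟨M * M', N' * N, ?_, ?_, by simp only [transpose_mul, Matrix.mul_assoc]⟩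
  · rw [Matrix.mul_assoc, ← Matrix.mul_assoc M', hMN', Matrix.one_mul, hMN]
  · rw [Matrix.mul_assoc, ← Matrix.mul_assoc N, hNM, Matrix.one_mul, hNM']

theorem PosDefInt.transpose_mul_mul {A M N : Matrix V V ℤ} (hA : PosDefInt A)
    (hNM : N * M = 1) : PosDefInt (Mᵀ * A * M) := by
  intro x hx
  rw [dotProduct_transpose_mul_mul_mulVec]
  refine hA _ fun h => hx ?_
  simpa [mulVec_mulVec, hNM] using congrArg (N *ᵥ ·) h

theorem PosDefInt.det_ne_zero {A : Matrix V V ℤ} (hA : PosDefInt A) : A.det ≠ 0 := by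
  intro h
  obtain ⟨v, hv, hAv⟩ := exists_mulVec_eq_zero_iff.mpr h
  simpa [hAv] using hA v hv

theorem PosDefInt.abs_le_of_dotProduct_mulVec_le {A : Matrix V V ℤ} (hA : PosDefInt A)
    (hsym : A.IsSymm) {c : ℤ} {x : V → ℤ} (hx : x ⬝ᵥ (A *ᵥ x) ≤ c) (k : V) :
    |x k| ≤ c * (A.adjugate *ᵥ Pi.single k 1) ⬝ᵥ (A *ᵥ (A.adjugate *ᵥ Pi.single k 1)) := by
  set u := A.adjugate *ᵥ Pi.single k 1
  have hxu : x ⬝ᵥ (A *ᵥ u) = A.det * x k := by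
    rw [mulVec_mulVec, mul_adjugate, smul_mulVec, one_mulVec, dotProduct_smul, dotProduct_single,
      smul_eq_mul, mul_one]
  have hdet : 1 ≤ A.det ^ 2 := by
    nlinarith [sq_pos_of_ne_zero hA.det_ne_zero]
  calc |x k| ≤ x k ^ 2 := by simpa using Int.natAbs_le_self_sq (x k)
    _ ≤ A.det ^ 2 * x k ^ 2 := le_mul_of_one_le_left (sq_nonneg _) hdet
    _ = (x ⬝ᵥ (A *ᵥ u)) ^ 2 := by rw [hxu]; ring
    _ ≤ (x ⬝ᵥ (A *ᵥ x)) * (u ⬝ᵥ (A *ᵥ u)) := hA.sq_dotProduct_mulVec_le hsym x u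
    _ ≤ c * (u ⬝ᵥ (A *ᵥ u)) := mul_le_mul_of_nonneg_right hx (hA.nonneg u)

theorem PosDefInt.finite_setOf_dotProduct_mulVec_le {A : Matrix V V ℤ} (hA : PosDefInt A)
    (hsym : A.IsSymm) (c : ℤ) : {x : V → ℤ | x ⬝ᵥ (A *ᵥ x) ≤ c}.Finite :=
  (Set.Finite.pi fun _ => Set.finite_Icc (-_) _).subset fun _ hx k _ =>
    abs_le.mp (hA.abs_le_of_dotProduct_mulVec_le hsym hx k)

theorem PosDefInt.exists_pos_dotProduct_ne_zero {A : Matrix V V ℤ} (hA : PosDefInt A)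
    (hsym : A.IsSymm) (c : ℤ) :
    ∃ ρ : V → ℤ, (∀ k, 0 < ρ k) ∧ ∀ x ≠ 0, x ⬝ᵥ (A *ᵥ x) ≤ c → ρ ⬝ᵥ x ≠ 0 := by
  set S := (hA.finite_setOf_dotProduct_mulVec_le hsym c).toFinset.erase 0
  obtain ⟨ρ, hρ, hS⟩ := _root_.exists_pos_dotProduct_ne_zero S (Finset.notMem_erase 0 _)
  exact ⟨ρ, hρ, fun x hx hxc => hS x (by simpa [S, hx] using hxc)⟩

namespace IsPosDefQuasiCartan

variable {B : Matrix V V ℤ}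

theorem neg_one_le_apply (hB : IsPosDefQuasiCartan B) {i j : V} (hij : i ≠ j) : -1 ≤ B i j := by
  have hx : Pi.single i 1 + Pi.single j 1 ≠ (0 : V → ℤ) := fun h => by
    simpa [hij] using congrFun h i
  have := hB.posDef _ hx
  simp only [mulVec_add, dotProduct_add, add_dotProduct, single_one_dotProduct_mulVec_single_one,
    hB.diag, hB.isSymm.apply i j] at this
  omega

theorem apply_le_one (hB : IsPosDefQuasiCartan B) {i j : V} (hij : i ≠ j) : B i j ≤ 1 := by
  have hx : Pi.single i 1 - Pi.single j 1 ≠ (0 : V → ℤ) := fun h => by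
    simpa [hij] using congrFun h i
  have := hB.posDef _ hx
  simp only [mulVec_sub, dotProduct_sub, sub_dotProduct, single_one_dotProduct_mulVec_single_one,
    hB.diag, hB.isSymm.apply i j] at this
  omega

theorem transvection_conj (hB : IsPosDefQuasiCartan B) {i j : V} (hij : i ≠ j)
    (hBij : B i j = 1) :
    IsPosDefQuasiCartan ((transvection i j (-1))ᵀ * B * transvection i j (-1)) := by
  refine ⟨hB.isSymm.transpose_mul_mul _, fun l => ?_, ?_⟩
  · rw [transpose_transvection, Matrix.mul_assoc]
    rcases eq_or_ne l j with rfl | hl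
    · simp [hB.diag, hB.isSymm.apply i l, hBij]
    · simp [hl, hB.diag]
  · exact hB.posDef.transpose_mul_mul (N := transvection i j 1) (by
      rw [transvection_mul_transvection_same i j hij]; simp)

theorem exists_zEquiv_sum_lt_of_apply_eq_one (hB : IsPosDefQuasiCartan B) {ρ : V → ℤ}
    (hρ : ∀ l, 0 < ρ l) (hgen : ∀ x, x ⬝ᵥ (B *ᵥ x) = 2 → ρ ⬝ᵥ x ≠ 0) {i j : V} (hij : i ≠ j)
    (hBij : B i j = 1) :
    ∃ B' ρ', IsPosDefQuasiCartan B' ∧ ZEquiv B B' ∧ (∀ l, 0 < ρ' l) ∧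
      (∀ x, x ⬝ᵥ (B' *ᵥ x) = 2 → ρ' ⬝ᵥ x ≠ 0) ∧ ∑ l, ρ' l < ∑ l, ρ l := by
  wlog hlt : ρ i < ρ j generalizing i j
  · refine this hij.symm ((hB.isSymm.apply i j).trans hBij) (lt_of_le_of_ne (not_lt.mp hlt) ?_)
    intro h
    refine hgen (Pi.single i 1 - Pi.single j 1) ?_ (by simp [h])
    simp [mulVec_sub, dotProduct_sub, sub_dotProduct, hB.diag, hB.isSymm.apply i j, hBij]
  set T := transvection i j (-1 : ℤ)
  refine ⟨Tᵀ * B * T, ρ ᵥ* T, hB.transvection_conj hij hBij,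
    ⟨T, transvection i j 1, ?_, ?_, rfl⟩, fun l => ?_, fun x hx => ?_, ?_⟩
  · rw [transvection_mul_transvection_same i j hij]; simp
  · rw [transvection_mul_transvection_same i j hij]; simp
  · rcases eq_or_ne l j with rfl | hl
    · simpa [T, vecMul_transvection] using hlt
    · simpa [T, vecMul_transvection, hl] using hρ l
  · rw [← dotProduct_mulVec]
    exact hgen _ (by rwa [← dotProduct_transpose_mul_mul_mulVec])
  · simp [T, vecMul_transvection, Finset.sum_add_distrib, hρ i]

theorem exists_zEquiv_cartan (hB : IsPosDefQuasiCartan B) {ρ : V → ℤ} (hρ : ∀ l, 0 < ρ l)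
    (hgen : ∀ x, x ⬝ᵥ (B *ᵥ x) = 2 → ρ ⬝ᵥ x ≠ 0) :
    ∃ C : Matrix V V ℤ, C.IsSymm ∧ (∀ i, C i i = 2) ∧
      (∀ i j, i ≠ j → C i j = -1 ∨ C i j = 0) ∧ ZEquiv B C := by
  induction hm : (∑ l, ρ l).toNat using Nat.strong_induction_on generalizing B ρ with
  | _ m ih =>
  by_cases hnonpos : ∀ i j, i ≠ j → B i j ≤ 0
  · refine ⟨B, hB.isSymm, hB.diag, fun i j hij => ?_, .refl B⟩
    have := hB.neg_one_le_apply hij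
    have := hnonpos i j hij
    omega
  push Not at hnonpos
  obtain ⟨i, j, hij, hBij⟩ := hnonpos
  obtain ⟨B', ρ', hB', hBB', hρ', hgen', hlt⟩ :=
    hB.exists_zEquiv_sum_lt_of_apply_eq_one hρ hgen hij (le_antisymm (hB.apply_le_one hij) hBij)
  have : 0 ≤ ∑ l, ρ' l := Finset.sum_nonneg fun l _ => (hρ' l).le
  obtain ⟨C, hCsymm, hCdiag, hCoff, hB'C⟩ := ih _ (by omega) hB' hρ' hgen' rfl
  exact ⟨C, hCsymm, hCdiag, hCoff, hBB'.trans hB'C⟩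

end IsPosDefQuasiCartan

end

theorem stmt7 (n : ℕ) (A : Matrix (Fin n) (Fin n) ℤ)
    (hsym : A.IsSymm) (hdiag : ∀ i, A i i = 2) (hpos : PosDefInt A) :
    ∃ B : Matrix (Fin n) (Fin n) ℤ, B.IsSymm ∧ (∀ i, B i i = 2) ∧
      (∀ i j, i ≠ j → B i j = -1 ∨ B i j = 0) ∧ ZEquiv A B := by
  obtain ⟨ρ, hρ, hgen⟩ := hpos.exists_pos_dotProduct_ne_zero hsym 2
  refine IsPosDefQuasiCartan.exists_zEquiv_cartan ⟨hsym, hdiag, hpos⟩ hρ fun x hx => ?_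
  exact hgen x (by rintro rfl; simp at hx) hx.le
end

section
/- Let V be a finite set and let X, Y, X′, Y′ be subsets of V that cover V and are pairwise disjoint except for X ∩ X′ = {s}. Let A be the symmetric integer matrix indexed by V which agrees with the F-matrix F[X,Y] on entries with both indices in X ∪ Y, agrees with the F-matrix F[X′,Y′] on entries with both indices in X′ ∪ Y′, and is 0 on all entries with one index in (X ∪ Y) ∖ {s} and the other in (X′ ∪ Y′) ∖ {s}. Then for every r ∈ Y, the matrix T_{s,r}A is the matrix built in exactly the same way from the four sets X, Y ∖ {r}, X′ ∪ {r}, Y′ (which again are pairwise disjoint except for X ∩ (X′ ∪ {r}) = {s}). -/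
/-!
Write `ε = signVec X Y` and `ε' = signVec X' Y'` (`±1` on the two parts, `0` elsewhere). The
glued matrix is `A = I - eₛeₛᵀ + εεᵀ + ε'ε'ᵀ`, and `A s r = -1`, so `T_{s,r} A = Mᵀ A M` with
`M = I + eₛeᵣᵀ`. This congruence fixes `I - eₛeₛᵀ` and turns each `uuᵀ` into `(uᵀM)ᵀ(uᵀM)`,
where `uᵀM = u + uₛeᵣ`. As `εₛ = ε'ₛ = 1`, both vectors gain `1` at `r`: `εᵣ = -1` becomes `0`
and `ε'ᵣ = 0` becomes `1`, i.e. `r` moves from `Y` to `X'`.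
-/

open Matrix

/-- The matrix indexed by `V` that agrees with the F-matrix `F[X,Y]` on entries with both
indices in `X ∪ Y`, agrees with the F-matrix `F[X',Y']` on entries with both indices in
`X' ∪ Y'`, and is `0` on all remaining (mixed) off-diagonal entries.  (Recall that the
F-matrix `F[X,Y]` has diagonal entries `2`, entry `+1` between two distinct vertices in the
same part, and entry `-1` between two vertices in different parts.) -/
def glueF {V : Type*} [DecidableEq V] (X Y X' Y' : Finset V) : Matrix V V ℤ :=
  fun i j =>
    if i = j then 2
    else if i ∈ X ∪ Y ∧ j ∈ X ∪ Y then (if (i ∈ X ↔ j ∈ X) then 1 else -1)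
    else if i ∈ X' ∪ Y' ∧ j ∈ X' ∪ Y' then (if (i ∈ X' ↔ j ∈ X') then 1 else -1)
    else 0

lemma transpose_mul_vecMulVec_mul {R n : Type*} [CommSemiring R] [Fintype n]
    (M : Matrix n n R) (u : n → R) :
    Mᵀ * vecMulVec u u * M = vecMulVec (u ᵥ* M) (u ᵥ* M) := by
  rw [mul_vecMulVec, vecMulVec_mul, mulVec_transpose]

def signVec {V : Type*} [DecidableEq V] (X Y : Finset V) : V → ℤ :=
  fun v => if v ∈ X then 1 else if v ∈ Y then -1 else 0

section

variable {V : Type*} [DecidableEq V]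

lemma vecMul_Msr [Fintype V] (σ : ℤ) (s r : V) (u : V → ℤ) :
    u ᵥ* Msr σ s r = u + Pi.single r (u s * σ) := by
  ext v
  simp only [Msr, vecMul_add, vecMul_one, Pi.add_apply, Pi.single_apply]
  congr 1
  by_cases hv : v = r <;> simp [vecMul, dotProduct, single_apply, hv, Ne.symm]

lemma Msr_transpose_mul_one_sub_single_mul [Fintype V] (σ : ℤ) (s r : V) :
    (Msr σ s r)ᵀ * (1 - single s s 1) * Msr σ s r = 1 - single s s 1 := by
  simp only [Msr, transpose_add, transpose_one, transpose_single, Matrix.add_mul, Matrix.mul_add,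
    Matrix.mul_sub, Matrix.sub_mul, single_mul_single_same, mul_one, one_mul]
  abel

lemma Tsr_eq_of_apply_eq_neg_one [Fintype V] {A : Matrix V V ℤ} {s r : V} (hA : A s r = -1) :
    Tsr s r A = (Msr 1 s r)ᵀ * A * Msr 1 s r := by
  rw [Tsr, hA, neg_neg]

lemma signVec_mul_signVec {X Y : Finset V} (hXY : Disjoint X Y) (i j : V) :
    signVec X Y i * signVec X Y j =
      if i ∈ X ∪ Y ∧ j ∈ X ∪ Y then (if (i ∈ X ↔ j ∈ X) then 1 else -1) else 0 := by
  have hi : i ∈ X → i ∉ Y := fun h => Finset.disjoint_left.mp hXY h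
  have hj : j ∈ X → j ∉ Y := fun h => Finset.disjoint_left.mp hXY h
  unfold signVec
  split_ifs <;> simp_all

lemma signVec_add_single_eq_erase {X Y : Finset V} {r : V} (hrX : r ∉ X) (hrY : r ∈ Y) :
    signVec X Y + Pi.single r 1 = signVec X (Y.erase r) := by
  ext v
  by_cases hv : v = r
  · subst hv; simp [signVec, hrX, hrY]
  · simp [signVec, hv]

lemma signVec_add_single_eq_insert {X Y : Finset V} {r : V} (hrX : r ∉ X) (hrY : r ∉ Y) :
    signVec X Y + Pi.single r 1 = signVec (insert r X) Y := by
  ext v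
  by_cases hv : v = r
  · subst hv; simp [signVec, hrX, hrY]
  · simp [signVec, hv]

lemma glueF_eq_one_sub_single_add_vecMulVec [Fintype V] {X Y X' Y' : Finset V} {s : V}
    (hcov : X ∪ Y ∪ X' ∪ Y' = Finset.univ) (hXY : Disjoint X Y) (hX'Y' : Disjoint X' Y')
    (hs : (X ∪ Y) ∩ (X' ∪ Y') = {s}) :
    glueF X Y X' Y' = 1 - single s s 1 + vecMulVec (signVec X Y) (signVec X Y)
      + vecMulVec (signVec X' Y') (signVec X' Y') := by
  have hmem : ∀ v, v ∈ X ∪ Y ∧ v ∈ X' ∪ Y' ↔ v = s := fun v => by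
    rw [← Finset.mem_inter, hs, Finset.mem_singleton]
  ext i j
  simp only [glueF, Matrix.add_apply, Matrix.sub_apply, one_apply, single_apply, vecMulVec_apply,
    signVec_mul_signVec hXY, signVec_mul_signVec hX'Y']
  by_cases hij : i = j
  · subst hij
    have hcov' : i ∈ X ∪ Y ∨ i ∈ X' ∪ Y' := by
      rw [← Finset.mem_union, ← Finset.union_assoc, hcov]
      exact Finset.mem_univ i
    simp only [and_self, iff_self, if_true, eq_comm (a := s), ← hmem i]
    by_cases h : i ∈ X ∪ Y <;> by_cases h' : i ∈ X' ∪ Y' <;> simp [h, h'] at hcov' ⊢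
  · have hsij : ¬(s = i ∧ s = j) := fun h => hij (h.1.symm.trans h.2)
    have hPQ : ¬((i ∈ X ∪ Y ∧ j ∈ X ∪ Y) ∧ (i ∈ X' ∪ Y' ∧ j ∈ X' ∪ Y')) := fun h =>
      hsij ⟨((hmem i).mp ⟨h.1.1, h.2.1⟩).symm, ((hmem j).mp ⟨h.1.2, h.2.2⟩).symm⟩
    simp only [if_neg hij, if_neg hsij, sub_zero, zero_add]
    by_cases hP : i ∈ X ∪ Y ∧ j ∈ X ∪ Y
    · rw [if_pos hP, if_pos hP, if_neg (fun hQ => hPQ ⟨hP, hQ⟩), add_zero]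
    · rw [if_neg hP, if_neg hP, zero_add]

lemma union_erase_inter_insert_union {X Y X' Y' : Finset V} {r s : V}
    (hs : (X ∪ Y) ∩ (X' ∪ Y') = {s}) (hrX : r ∉ X) (hrs : r ≠ s) :
    (X ∪ Y.erase r) ∩ (insert r X' ∪ Y') = {s} := by
  ext v
  by_cases hv : v = r
  · simp [hv, hrX, hrs]
  · simpa [hv] using Finset.ext_iff.mp hs v

lemma union_erase_union_insert_union [Fintype V] {X Y X' Y' : Finset V} (r : V)
    (hcov : X ∪ Y ∪ X' ∪ Y' = Finset.univ) :
    X ∪ Y.erase r ∪ insert r X' ∪ Y' = Finset.univ := by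
  rw [Finset.eq_univ_iff_forall] at hcov ⊢
  intro v
  by_cases hv : v = r
  · simp [hv]
  · simpa [hv, or_assoc] using hcov v

end

theorem stmt8 (V : Type*) [Fintype V] [DecidableEq V]
    (X Y X' Y' : Finset V) (s : V)
    (hcov : X ∪ Y ∪ X' ∪ Y' = Finset.univ)
    (hXX' : X ∩ X' = {s})
    (hXY : X ∩ Y = ∅) (hXY' : X ∩ Y' = ∅)
    (hYX' : Y ∩ X' = ∅) (hYY' : Y ∩ Y' = ∅) (hX'Y' : X' ∩ Y' = ∅)
    (r : V) (hr : r ∈ Y) :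
    Tsr s r (glueF X Y X' Y') = glueF X (Y.erase r) (insert r X') Y' := by
  have hs : (X ∪ Y) ∩ (X' ∪ Y') = {s} := by
    simp only [Finset.union_inter_distrib_right, Finset.inter_union_distrib_left, hXX', hXY',
      hYX', hYY', Finset.union_empty]
  have hsX : s ∈ X := (Finset.mem_inter.mp (hXX' ▸ Finset.mem_singleton_self s)).1
  have hsX' : s ∈ X' := (Finset.mem_inter.mp (hXX' ▸ Finset.mem_singleton_self s)).2
  rw [← Finset.disjoint_iff_inter_eq_empty] at hXY hYX' hYY' hX'Y'
  have hrX : r ∉ X := Finset.disjoint_right.mp hXY hr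
  have hrX' : r ∉ X' := Finset.disjoint_left.mp hYX' hr
  have hrY' : r ∉ Y' := Finset.disjoint_left.mp hYY' hr
  have hrs : r ≠ s := fun h => hrX (h ▸ hsX)
  have hA : glueF X Y X' Y' s r = -1 := by simp [glueF, hsX, hr, hrX, hrs.symm]
  rw [Tsr_eq_of_apply_eq_neg_one hA, glueF_eq_one_sub_single_add_vecMulVec hcov hXY hX'Y' hs,
    glueF_eq_one_sub_single_add_vecMulVec (union_erase_union_insert_union r hcov)
      (hXY.mono_right (Y.erase_subset r)) (Finset.disjoint_insert_left.mpr ⟨hrY', hX'Y'⟩)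
      (union_erase_inter_insert_union hs hrX hrs)]
  simp only [Matrix.add_mul, Matrix.mul_add, Msr_transpose_mul_one_sub_single_mul,
    transpose_mul_vecMulVec_mul, vecMul_Msr]
  rw [show signVec X Y s = 1 from if_pos hsX, show signVec X' Y' s = 1 from if_pos hsX', mul_one,
    signVec_add_single_eq_erase hrX hr, signVec_add_single_eq_insert hrX' hrY']
end

section
/- Let n ≥ 1 and let X be any subset of an n-element index set V. Then the F-matrix F[X, V ∖ X] is ℤ-equivalent to the Cartan matrix of type A_n. -/
open Matrix

/-- The F-matrix `F[X, V ∖ X]` indexed by `V`: diagonal entries `2`, entry `+1` between two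
distinct vertices lying in the same part, `-1` between two vertices in different parts. -/
def Fmat {V : Type*} [DecidableEq V] (X : Finset V) : Matrix V V ℤ :=
  fun i j => if i = j then 2 else if (i ∈ X ↔ j ∈ X) then 1 else -1

/-- The Cartan matrix of Dynkin type `A_n`. -/
def CartanA (n : ℕ) : Matrix (Fin n) (Fin n) ℤ :=
  fun i j => if i = j then 2
    else if (i : ℕ) + 1 = j ∨ (j : ℕ) + 1 = i then -1
    else 0

/-- Columns `e_i - e_{i+1}` (the last column is just `e_{n-1}`). -/
def Mmat (n : ℕ) : Matrix (Fin n) (Fin n) ℤ :=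
  fun k i => (if k = i then 1 else 0) - (if (k : ℕ) = (i : ℕ) + 1 then 1 else 0)

/-- Lower-triangular all-ones matrix, the inverse of `Mmat`. -/
def Tmat (n : ℕ) : Matrix (Fin n) (Fin n) ℤ :=
  fun k i => if (i : ℕ) ≤ (k : ℕ) then 1 else 0

lemma sum_shift {n : ℕ} (a : Fin n) (f : Fin n → ℤ) :
    (∑ i : Fin n, if (i : ℕ) = (a : ℕ) + 1 then f i else 0) =
      if h : (a : ℕ) + 1 < n then f ⟨(a : ℕ) + 1, h⟩ else 0 := by
  split
  · next h =>
    rw [Finset.sum_eq_single (⟨(a : ℕ) + 1, h⟩ : Fin n)]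
    · simp
    · intro i _ hne
      rw [if_neg]
      intro hc
      exact hne (Fin.ext hc)
    · simp
  · next h =>
    apply Finset.sum_eq_zero
    intro i _
    rw [if_neg]
    intro hc
    exact h (hc ▸ i.isLt)

lemma colM {n : ℕ} (b : Fin n) (g : Fin n → ℤ) :
    (∑ l : Fin n, g l * Mmat n l b) =
      g b - (if h : (b : ℕ) + 1 < n then g ⟨(b : ℕ) + 1, h⟩ else 0) := by
  simp only [Mmat, mul_sub, mul_ite, mul_one, mul_zero, Finset.sum_sub_distrib]
  congr 1
  · simp
  · exact sum_shift b g

lemma TM (n : ℕ) : Tmat n * Mmat n = 1 := by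
  ext k j
  rw [mul_apply, colM j (fun i => Tmat n k i)]
  have hk := k.isLt
  simp only [Tmat, one_apply, Fin.ext_iff]
  split_ifs <;> omega

lemma MT (n : ℕ) : Mmat n * Tmat n = 1 :=
  mul_eq_one_comm.mpr (TM n)

lemma key (n : ℕ) :
    (Mmat n)ᵀ * (Fmat (∅ : Finset (Fin n)) * Mmat n) = CartanA n := by
  ext a b
  have hFM : ∀ k : Fin n, (Fmat (∅ : Finset (Fin n)) * Mmat n) k b =
      Fmat (∅ : Finset (Fin n)) k b -
        (if h : (b : ℕ) + 1 < n then Fmat (∅ : Finset (Fin n)) k ⟨(b : ℕ) + 1, h⟩ else 0) := by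
    intro k
    rw [mul_apply, colM b (fun l => Fmat (∅ : Finset (Fin n)) k l)]
  rw [mul_apply]
  simp only [transpose_apply]
  have : (∑ k : Fin n, Mmat n k a * (Fmat (∅ : Finset (Fin n)) * Mmat n) k b) =
      ∑ k : Fin n, (Fmat (∅ : Finset (Fin n)) * Mmat n) k b * Mmat n k a := by
    simp [mul_comm]
  rw [this, colM a (fun k => (Fmat (∅ : Finset (Fin n)) * Mmat n) k b)]
  rw [hFM a]
  by_cases ha : (a : ℕ) + 1 < n
  · rw [dif_pos ha, hFM ⟨(a : ℕ) + 1, ha⟩]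
    have hlta := a.isLt
    have hltb := b.isLt
    simp only [Fmat, CartanA, Finset.notMem_empty, iff_self, if_true, Fin.ext_iff]
    split_ifs <;> omega
  · rw [dif_neg ha]
    have hlta := a.isLt
    have hltb := b.isLt
    simp only [Fmat, CartanA, Finset.notMem_empty, iff_self, if_true, Fin.ext_iff]
    split_ifs <;> omega

theorem stmt10 (n : ℕ) (hn : 1 ≤ n) (X : Finset (Fin n)) :
    ZEquiv (Fmat X) (CartanA n) := by
  classical
  set d : Fin n → ℤ := fun i => if i ∈ X then -1 else 1 with hd
  have hDD : diagonal d * diagonal d = 1 := by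
    rw [diagonal_mul_diagonal]
    ext i j
    by_cases h : i ∈ X <;> simp [diagonal, hd, one_apply, h] <;> split <;> simp_all
  have hDFD : diagonal d * Fmat X * diagonal d = Fmat (∅ : Finset (Fin n)) := by
    ext i j
    rw [mul_diagonal, diagonal_mul]
    simp only [Fmat, Finset.notMem_empty, iff_self, hd]
    by_cases hij : i = j
    · subst hij; split_ifs <;> simp_all
    · by_cases hi : i ∈ X <;> by_cases hj : j ∈ X <;> simp [hij, hi, hj]
  refine ⟨diagonal d * Mmat n, Tmat n * diagonal d, ?_, ?_, ?_⟩
  · calc diagonal d * Mmat n * (Tmat n * diagonal d)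
        = diagonal d * (Mmat n * Tmat n) * diagonal d := by simp only [mul_assoc]
      _ = 1 := by rw [MT]; rw [mul_one, hDD]
  · calc Tmat n * diagonal d * (diagonal d * Mmat n)
        = Tmat n * (diagonal d * diagonal d) * Mmat n := by simp only [mul_assoc]
      _ = 1 := by rw [hDD, mul_one, TM]
  · rw [transpose_mul, diagonal_transpose]
    calc CartanA n = (Mmat n)ᵀ * (Fmat (∅ : Finset (Fin n)) * Mmat n) := (key n).symm
      _ = (Mmat n)ᵀ * diagonal d * Fmat X * (diagonal d * Mmat n) := by
          rw [← hDFD]; simp only [mul_assoc]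
end

section
/- Let V be a finite set with n elements, and let V₁, V₂ ⊆ V with V₁ ∪ V₂ = V and V₁ ∩ V₂ = {s}. Let X₁ ⊆ V₁ and X₂ ⊆ V₂, and let A be the symmetric integer matrix indexed by V which agrees with the F-matrix F[X₁, V₁ ∖ X₁] on entries with both indices in V₁, agrees with the F-matrix F[X₂, V₂ ∖ X₂] on entries with both indices in V₂, and is 0 on all entries with one index in V₁ ∖ {s} and the other in V₂ ∖ {s}. Then A is ℤ-equivalent to the Cartan matrix of type A_n. -/
open Matrix

/-- The matrix indexed by `V` that agrees with the F-matrix `F[X₁, V₁ ∖ X₁]` on entries with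
both indices in `V₁`, agrees with the F-matrix `F[X₂, V₂ ∖ X₂]` on entries with both indices
in `V₂`, and is `0` on all remaining (mixed) off-diagonal entries.  (Recall that the F-matrix
`F[X,Y]` has diagonal entries `2`, entry `+1` between two distinct vertices in the same part,
and entry `-1` between two vertices in different parts.) -/
def glue2 {V : Type*} [DecidableEq V] (V₁ V₂ X₁ X₂ : Finset V) : Matrix V V ℤ :=
  fun i j =>
    if i = j then 2
    else if i ∈ V₁ ∧ j ∈ V₁ then (if (i ∈ X₁ ↔ j ∈ X₁) then 1 else -1)
    else if i ∈ V₂ ∧ j ∈ V₂ then (if (i ∈ X₂ ↔ j ∈ X₂) then 1 else -1)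
    else 0

/-!
A diagonal `±1` congruence switches the signs of `glue2 V₁ V₂ X₁ X₂` to those of
`glue2 V₁ V₂ V₁ {s}`. The latter is the Gram matrix of the edge vectors `e_a - e_b` of a double
star on `n + 1` points (centres `s` and a new point `∞`), while `CartanA n` is the Gram matrix of
the edge vectors of a path on the same points. Both families are `ℤ`-bases of the lattice spanned
by all differences `e_p - e_q`, so the change of basis between them is unimodular and congruent
Gram matrices result.
-/

namespace ZEquiv

variable {V : Type*} [Fintype V] [DecidableEq V] {A B C : Matrix V V ℤ}

theorem symm (h : ZEquiv A B) : ZEquiv B A := by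
  obtain ⟨M, N, hMN, hNM, rfl⟩ := h
  refine ⟨N, M, hNM, hMN, ?_⟩
  calc A = (M * N)ᵀ * A * (M * N) := by simp [hMN]
    _ = Nᵀ * (Mᵀ * A * M) * N := by simp only [transpose_mul, Matrix.mul_assoc]

theorem trans_s11 (h₁ : ZEquiv A B) (h₂ : ZEquiv B C) : ZEquiv A C := by
  obtain ⟨M, N, hMN, hNM, rfl⟩ := h₁
  obtain ⟨M', N', hMN', hNM', rfl⟩ := h₂
  refine ⟨M * M', N' * N, ?_, ?_, by simp only [transpose_mul, Matrix.mul_assoc]⟩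
  · rw [Matrix.mul_assoc, ← Matrix.mul_assoc M', hMN', Matrix.one_mul, hMN]
  · rw [Matrix.mul_assoc, ← Matrix.mul_assoc N, hNM, Matrix.one_mul, hNM']

theorem diagonal_mul_mul_diagonal (G : Matrix V V ℤ) {d : V → ℤ} (hd : ∀ i, d i * d i = 1) :
    ZEquiv G (diagonal d * G * diagonal d) := by
  have hdd : diagonal d * diagonal d = 1 := by
    rw [diagonal_mul_diagonal, ← diagonal_one]; exact congrArg diagonal (funext hd)
  exact ⟨diagonal d, diagonal d, hdd, hdd, by rw [diagonal_transpose]⟩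

end ZEquiv

section Switching

variable {V : Type*} [DecidableEq V]

def finsetSign (X : Finset V) (i : V) : ℤ := if i ∈ X then 1 else -1

theorem finsetSign_mul_self (X : Finset V) (i : V) : finsetSign X i * finsetSign X i = 1 := by
  unfold finsetSign; split_ifs <;> norm_num

theorem ite_iff_eq_finsetSign_mul (X : Finset V) (i j : V) :
    (if (i ∈ X ↔ j ∈ X) then (1 : ℤ) else -1) = finsetSign X i * finsetSign X j := by
  unfold finsetSign; split_ifs <;> simp_all

variable (V₁ X₁ X₂ : Finset V) (s : V)

/-- Chosen so that it is `finsetSign X₁` on `V₁`, and on `V₂` its product with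
`finsetSign {s}` is the constant `finsetSign X₁ s * finsetSign X₂ s` times `finsetSign X₂`. -/
def glue2Switching (i : V) : ℤ :=
  if i ∈ V₁ then finsetSign X₁ i else -(finsetSign X₁ s * finsetSign X₂ s * finsetSign X₂ i)

theorem glue2Switching_mul_self (i : V) :
    glue2Switching V₁ X₁ X₂ s i * glue2Switching V₁ X₁ X₂ s i = 1 := by
  unfold glue2Switching
  split_ifs
  · exact finsetSign_mul_self X₁ i
  · linear_combination (finsetSign X₂ s * finsetSign X₂ s * finsetSign X₂ i * finsetSign X₂ i) *
      finsetSign_mul_self X₁ s + (finsetSign X₂ i * finsetSign X₂ i) * finsetSign_mul_self X₂ s +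
      finsetSign_mul_self X₂ i

theorem glue2Switching_mul_finsetSign_singleton {V₂ : Finset V} (hint : V₁ ∩ V₂ = {s}) {i : V}
    (hi : i ∈ V₂) : glue2Switching V₁ X₁ X₂ s i * finsetSign {s} i =
      finsetSign X₁ s * finsetSign X₂ s * finsetSign X₂ i := by
  have hmem : i ∈ V₁ ↔ i = s := by
    rw [← Finset.mem_singleton, ← hint, Finset.mem_inter, and_iff_left hi]
  by_cases his : i = s
  · subst his
    rw [glue2Switching, if_pos (hmem.mpr rfl), show finsetSign {i} i = 1 by simp [finsetSign]]
    linear_combination (-finsetSign X₁ i) * finsetSign_mul_self X₂ i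
  · simp [glue2Switching, finsetSign, hmem, his]

theorem glue2_eq_diagonal_mul_mul_diagonal [Fintype V] {V₂ : Finset V} (hint : V₁ ∩ V₂ = {s}) :
    glue2 V₁ V₂ X₁ X₂ = diagonal (glue2Switching V₁ X₁ X₂ s) * glue2 V₁ V₂ V₁ {s} *
      diagonal (glue2Switching V₁ X₁ X₂ s) := by
  ext i j
  simp only [mul_diagonal, diagonal_mul, glue2, ite_iff_eq_finsetSign_mul]
  split_ifs with hij h₁ h₂
  · subst hij
    linear_combination -2 * glue2Switching_mul_self V₁ X₁ X₂ s i
  · simp [glue2Switching, finsetSign, h₁]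
  · set d := glue2Switching V₁ X₁ X₂ s
    calc finsetSign X₂ i * finsetSign X₂ j
        = (finsetSign X₁ s * finsetSign X₁ s) * (finsetSign X₂ s * finsetSign X₂ s) *
            (finsetSign X₂ i * finsetSign X₂ j) := by
          rw [finsetSign_mul_self, finsetSign_mul_self]; ring
      _ = d i * finsetSign {s} i * (d j * finsetSign {s} j) := by
          rw [glue2Switching_mul_finsetSign_singleton V₁ X₁ X₂ s hint h₂.1,
            glue2Switching_mul_finsetSign_singleton V₁ X₁ X₂ s hint h₂.2]; ring
      _ = d i * (finsetSign {s} i * finsetSign {s} j) * d j := by ring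
  · simp

end Switching

theorem Matrix.exists_eq_mul_of_range_le {R m n o : Type*} [CommSemiring R] [Fintype n]
    [Fintype o] [DecidableEq o] {A : Matrix m n R} {E : Matrix m o R}
    (h : LinearMap.range E.mulVecLin ≤ LinearMap.range A.mulVecLin) :
    ∃ M : Matrix n o R, E = A * M := by
  have hcol (i : o) : ∃ x, A *ᵥ x = E.col i :=
    h ⟨Pi.single i 1, by simp⟩
  choose x hx using hcol
  refine ⟨(of x)ᵀ, ext fun p i => ?_⟩
  exact (congrFun (hx i) p).symm

theorem ZEquiv.gram_of_range_eq {P ι : Type*} [Fintype P] [Fintype ι] [DecidableEq ι]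
    {A E : Matrix P ι ℤ} {L : Matrix ι P ℤ} (hL : L * A = 1)
    (h : LinearMap.range A.mulVecLin = LinearMap.range E.mulVecLin) :
    ZEquiv (Eᵀ * E) (Aᵀ * A) := by
  obtain ⟨M, hM⟩ := exists_eq_mul_of_range_le h.ge
  obtain ⟨N, hN⟩ := exists_eq_mul_of_range_le h.le
  have hMN : M * N = 1 := by
    calc M * N = L * (A * M) * N := by rw [← Matrix.mul_assoc, hL, Matrix.one_mul]
      _ = 1 := by rw [← hM, Matrix.mul_assoc, ← hN, hL]
  refine ⟨N, M, mul_eq_one_comm.mp hMN, hMN, ?_⟩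
  rw [hN, transpose_mul]
  simp only [Matrix.mul_assoc]

section EdgeMatrix

variable {P ι : Type*} [DecidableEq P]

def edgeMatrix (u v : ι → P) : Matrix P ι ℤ :=
  (of fun i => Pi.single (u i) 1 - Pi.single (v i) 1)ᵀ

@[simp]
theorem edgeMatrix_apply (u v : ι → P) (p : P) (i : ι) :
    edgeMatrix u v p i = (if p = u i then 1 else 0) - (if p = v i then 1 else 0) := by
  simp [edgeMatrix, Pi.single_apply]

theorem mul_edgeMatrix_apply {m : Type*} [Fintype P] (B : Matrix m P ℤ) (u v : ι → P)
    (k : m) (i : ι) : (B * edgeMatrix u v) k i = B k (u i) - B k (v i) := by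
  simp [edgeMatrix, mul_apply, Pi.single_apply, mul_sub]

variable (P) in
def rootLattice : Submodule ℤ (P → ℤ) :=
  Submodule.span ℤ {x | ∃ p q : P, Pi.single p 1 - Pi.single q 1 = x}

theorem single_sub_single_mem_range_edgeMatrix [Fintype ι] [DecidableEq ι] (u v : ι → P)
    (i : ι) : Pi.single (u i) 1 - Pi.single (v i) 1 ∈ LinearMap.range (edgeMatrix u v).mulVecLin :=
  ⟨Pi.single i 1, by simp [edgeMatrix]⟩

theorem range_edgeMatrix_le_rootLattice [Fintype ι] (u v : ι → P) :
    LinearMap.range (edgeMatrix u v).mulVecLin ≤ rootLattice P := by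
  rw [range_mulVecLin, Submodule.span_le]
  rintro _ ⟨i, rfl⟩
  exact Submodule.subset_span ⟨u i, v i, by simp [edgeMatrix]⟩

theorem rootLattice_le_of_forall_mem {S : Submodule ℤ (P → ℤ)} (o : P)
    (h : ∀ p, Pi.single p 1 - Pi.single o 1 ∈ S) : rootLattice P ≤ S := by
  rw [rootLattice, Submodule.span_le]
  rintro _ ⟨p, q, rfl⟩
  simpa using S.sub_mem (h p) (h q)

end EdgeMatrix

section Chain

variable (n : ℕ)

def chainMatrix : Matrix (Fin (n + 1)) (Fin n) ℤ := edgeMatrix Fin.castSucc Fin.succ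

theorem gram_chainMatrix : (chainMatrix n)ᵀ * chainMatrix n = CartanA n := by
  ext k l
  simp only [chainMatrix, mul_edgeMatrix_apply, transpose_apply, edgeMatrix_apply, CartanA,
    Fin.ext_iff, Fin.val_castSucc, Fin.val_succ]
  split_ifs <;> omega

def prefixSumMatrix : Matrix (Fin n) (Fin (n + 1)) ℤ :=
  of fun k p => if p ≤ k.castSucc then 1 else 0

theorem prefixSumMatrix_mul_chainMatrix : prefixSumMatrix n * chainMatrix n = 1 := by
  ext k l
  simp only [chainMatrix, mul_edgeMatrix_apply, prefixSumMatrix, of_apply, one_apply,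
    Fin.le_def, Fin.ext_iff, Fin.val_castSucc, Fin.val_succ]
  split_ifs <;> omega

theorem range_chainMatrix :
    LinearMap.range (chainMatrix n).mulVecLin = rootLattice (Fin (n + 1)) := by
  refine le_antisymm (range_edgeMatrix_le_rootLattice _ _)
    (rootLattice_le_of_forall_mem (Fin.last n) fun p => ?_)
  induction p using Fin.reverseInduction with
  | last => simp
  | cast k ih =>
    simpa [chainMatrix] using Submodule.add_mem _ (single_sub_single_mem_range_edgeMatrix _ _ k) ih

end Chain

section DoubleStar

variable {n : ℕ} (V₁ : Finset (Fin n)) (s : Fin n)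

def doubleStarCenter (i : Fin n) : Fin (n + 1) := if i ∈ V₁ then s.castSucc else Fin.last n

def doubleStarLeaf (i : Fin n) : Fin (n + 1) := if i = s then Fin.last n else i.castSucc

/-- Column `i` is edge `i` of the double star on `Fin (n + 1)` with extra point `∞ = Fin.last n`:
it joins `s` to `i` for `i ∈ V₁ \ {s}`, `∞` to `i` for `i ∉ V₁`, and `s` to `∞` for `i = s`. -/
def doubleStarMatrix : Matrix (Fin (n + 1)) (Fin n) ℤ :=
  edgeMatrix (doubleStarCenter V₁ s) (doubleStarLeaf s)

theorem range_doubleStarMatrix (hs : s ∈ V₁) :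
    LinearMap.range (doubleStarMatrix V₁ s).mulVecLin = rootLattice (Fin (n + 1)) := by
  refine le_antisymm (range_edgeMatrix_le_rootLattice _ _)
    (rootLattice_le_of_forall_mem (Fin.last n) fun p => ?_)
  have edge : ∀ i, Pi.single (doubleStarCenter V₁ s i) 1 - Pi.single (doubleStarLeaf s i) 1 ∈
      LinearMap.range (doubleStarMatrix V₁ s).mulVecLin :=
    single_sub_single_mem_range_edgeMatrix _ _
  have center : Pi.single s.castSucc 1 - Pi.single (Fin.last n) 1 ∈
      LinearMap.range (doubleStarMatrix V₁ s).mulVecLin := by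
    simpa [doubleStarCenter, doubleStarLeaf, hs] using edge s
  induction p using Fin.lastCases with
  | last => simp
  | cast j =>
    by_cases hj : j ∈ V₁
    · by_cases hjs : j = s
      · exact hjs ▸ center
      · simpa [doubleStarCenter, doubleStarLeaf, hj, hjs] using
          Submodule.sub_mem _ center (edge j)
    · simpa [doubleStarCenter, doubleStarLeaf, hj, ne_of_mem_of_not_mem hs hj |>.symm] using
        Submodule.neg_mem _ (edge j)

theorem gram_doubleStarMatrix (V₂ : Finset (Fin n)) (hcov : V₁ ∪ V₂ = Finset.univ)
    (hint : V₁ ∩ V₂ = {s}) :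
    (doubleStarMatrix V₁ s)ᵀ * doubleStarMatrix V₁ s = glue2 V₁ V₂ V₁ {s} := by
  have hs : s ∈ V₁ ∧ s ∈ V₂ := Finset.mem_inter.mp (hint ▸ Finset.mem_singleton_self s)
  have side (i : Fin n) : i = s ∨ (i ∈ V₁ ∧ i ∉ V₂ ∧ i ≠ s) ∨ (i ∉ V₁ ∧ i ∈ V₂ ∧ i ≠ s) := by
    have hi : i ∈ V₁ ∪ V₂ := hcov ▸ Finset.mem_univ i
    have hi' : i ∈ V₁ ∩ V₂ ↔ i = s := by rw [hint, Finset.mem_singleton]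
    grind
  ext i j
  simp only [doubleStarMatrix, mul_edgeMatrix_apply, transpose_apply, edgeMatrix_apply,
    doubleStarCenter, doubleStarLeaf, glue2, Finset.mem_singleton]
  rcases side i with rfl | ⟨hi₁, hi₂, his⟩ | ⟨hi₁, hi₂, his⟩ <;>
  rcases side j with rfl | ⟨hj₁, hj₂, hjs⟩ | ⟨hj₁, hj₂, hjs⟩ <;>
  simp [*, Ne.symm, Fin.castSucc_ne_last] <;> grind

end DoubleStar

theorem stmt11_general (n : ℕ) (V₁ V₂ X₁ X₂ : Finset (Fin n)) (s : Fin n)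
    (hcov : V₁ ∪ V₂ = Finset.univ) (hint : V₁ ∩ V₂ = {s}) :
    ZEquiv (glue2 V₁ V₂ X₁ X₂) (CartanA n) := by
  have hs : s ∈ V₁ := (Finset.mem_inter.mp (hint ▸ Finset.mem_singleton_self s)).1
  have switching : ZEquiv (glue2 V₁ V₂ V₁ {s}) (glue2 V₁ V₂ X₁ X₂) := by
    rw [glue2_eq_diagonal_mul_mul_diagonal V₁ X₁ X₂ s hint]
    exact ZEquiv.diagonal_mul_mul_diagonal _ (glue2Switching_mul_self V₁ X₁ X₂ s)
  have lattice : ZEquiv (glue2 V₁ V₂ V₁ {s}) (CartanA n) := by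
    rw [← gram_doubleStarMatrix V₁ s V₂ hcov hint, ← gram_chainMatrix]
    refine ZEquiv.gram_of_range_eq (prefixSumMatrix_mul_chainMatrix n) ?_
    rw [range_chainMatrix, range_doubleStarMatrix V₁ s hs]
  exact switching.symm.trans_s11 lattice

theorem stmt11 (n : ℕ) (V₁ V₂ X₁ X₂ : Finset (Fin n)) (s : Fin n)
    (hcov : V₁ ∪ V₂ = Finset.univ) (hint : V₁ ∩ V₂ = {s})
    (hX₁ : X₁ ⊆ V₁) (hX₂ : X₂ ⊆ V₂) :
    ZEquiv (glue2 V₁ V₂ X₁ X₂) (CartanA n) :=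
  stmt11_general n V₁ V₂ X₁ X₂ s hcov hint
end

section
/- Let n ≥ 4 and let ε : ℤ/n → {−1, +1} be a sign assignment such that the number of indices i with ε_i = +1 is odd. Then the cycle quasi-Cartan matrix C(ε) is ℤ-equivalent to the Cartan matrix of type D_n. -/
open Matrix

/-- The cycle quasi-Cartan matrix `C(ε)`:  indexed by `ℤ/n` (realized as `Fin n` with
cyclic successor `i ↦ (i+1) % n`), diagonal entries `2`, entries `C(ε)_{i,i+1} =
C(ε)_{i+1,i} = ε i`, and `0` elsewhere. -/
def CycM (n : ℕ) (ε : Fin n → ℤ) : Matrix (Fin n) (Fin n) ℤ :=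
  fun i j =>
    if i = j then 2
    else if (j : ℕ) = ((i : ℕ) + 1) % n then ε i
    else if (i : ℕ) = ((j : ℕ) + 1) % n then ε j
    else 0

/-- The Cartan matrix of Dynkin type `D_n` (vertices `0, …, n-1`; vertices `0` and `1` are
both joined to `2`, followed by the path `2 — 3 — ⋯ — (n-1)`). -/
def CartanD (n : ℕ) : Matrix (Fin n) (Fin n) ℤ :=
  fun i j =>
    if i = j then 2
    else if ((i : ℕ) = 0 ∧ (j : ℕ) = 2) ∨ ((j : ℕ) = 0 ∧ (i : ℕ) = 2) ∨
            ((i : ℕ) = 1 ∧ (j : ℕ) = 2) ∨ ((j : ℕ) = 1 ∧ (i : ℕ) = 2) ∨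
            (2 ≤ (i : ℕ) ∧ (j : ℕ) = (i : ℕ) + 1) ∨ (2 ≤ (j : ℕ) ∧ (i : ℕ) = (j : ℕ) + 1)
      then -1
    else 0

namespace Stmt12Aux

def δ (a b : ℕ) : ℤ := if a = b then 1 else 0

def Pf (n : ℕ) : ℕ → ℕ → ℤ := fun i k =>
  if i < n - 1 then δ k i - δ k (i + 1) else δ k 0 + δ k (n - 1)

def Qf : ℕ → ℕ → ℤ := fun j k =>
  if j = 0 then -δ k 0 - δ k 1 else δ k (j - 1) - δ k j

def Nf : ℕ → ℕ → ℤ := fun a j =>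
  if j = 0 then δ a 0 - 1 else δ a (j - 1)

def Nf' (n : ℕ) : ℕ → ℕ → ℤ := fun j k =>
  if j = 0 then -δ k (n - 1) else if j = 1 then δ k 0 else δ k (j - 1) - δ k (n - 1)

def PM (n : ℕ) : Matrix (Fin n) (Fin n) ℤ := of fun i k => Pf n i.val k.val
def QM (n : ℕ) : Matrix (Fin n) (Fin n) ℤ := of fun j k => Qf j.val k.val
def NM (n : ℕ) : Matrix (Fin n) (Fin n) ℤ := of fun a j => Nf a.val j.val
def NM' (n : ℕ) : Matrix (Fin n) (Fin n) ℤ := of fun j k => Nf' n j.val k.val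

lemma sum_delta_mul {n : ℕ} (x : ℕ) (hx : x < n) (f : ℕ → ℤ) :
    ∑ k ∈ Finset.range n, δ k x * f k = f x := by
  simp only [δ, ite_mul, one_mul, zero_mul]
  rw [Finset.sum_ite_eq']
  simp [hx]

lemma sum_delta_delta {n : ℕ} (x y : ℕ) (hx : x < n) :
    ∑ k ∈ Finset.range n, δ k x * δ k y = δ x y :=
  sum_delta_mul x hx _

lemma sum_two_two {n : ℕ} (s t u v : ℤ) (x y z w : ℕ) (hx : x < n) (hy : y < n) :
    ∑ k ∈ Finset.range n, (s * δ k x + t * δ k y) * (u * δ k z + v * δ k w)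
      = s * u * δ x z + s * v * δ x w + t * u * δ y z + t * v * δ y w := by
  have h : ∀ k, (s * δ k x + t * δ k y) * (u * δ k z + v * δ k w)
      = s * u * (δ k x * δ k z) + s * v * (δ k x * δ k w)
        + t * u * (δ k y * δ k z) + t * v * (δ k y * δ k w) := fun k => by ring
  simp only [h, Finset.sum_add_distrib, ← Finset.mul_sum]
  rw [sum_delta_delta x z hx, sum_delta_delta x w hx,
    sum_delta_delta y z hy, sum_delta_delta y w hy]

lemma modsucc {n : ℕ} (hn : 4 ≤ n) {a b : ℕ} (ha : a < n) (hb : b < n) :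
    b = (a + 1) % n ↔ (b = a + 1 ∨ (a = n - 1 ∧ b = 0)) := by
  rcases Nat.lt_or_ge (a + 1) n with h | h
  · rw [Nat.mod_eq_of_lt h]; omega
  · have h2 : a + 1 = n := by omega
    rw [h2, Nat.mod_self]; omega

set_option maxHeartbeats 1600000 in
lemma hPP {n : ℕ} (hn : 4 ≤ n) :
    PM n * (PM n)ᵀ =
      CycM n (fun i => if (i : ℕ) = n - 1 then 1 else -1) := by
  ext i j
  have hi := i.isLt
  have hj := j.isLt
  rw [mul_apply]
  simp only [PM, transpose_apply, of_apply]
  rw [show (∑ k : Fin n, Pf n i.val k.val * Pf n j.val k.val)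
      = ∑ k ∈ Finset.range n, Pf n i.val k * Pf n j.val k from
    Fin.sum_univ_eq_sum_range (fun k => Pf n i.val k * Pf n j.val k) n]
  simp only [CycM, Fin.ext_iff, modsucc hn hi hj, modsucc hn hj hi]
  by_cases h1 : i.val < n - 1 <;> by_cases h2 : j.val < n - 1
  · rw [Finset.sum_congr rfl (fun k _ => show Pf n i.val k * Pf n j.val k
        = (1 * δ k i.val + (-1) * δ k (i.val + 1))
          * (1 * δ k j.val + (-1) * δ k (j.val + 1)) by
      simp only [Pf, if_pos h1, if_pos h2]; ring)]
    rw [sum_two_two 1 (-1) 1 (-1) _ _ _ _ (by omega) (by omega)]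
    simp only [δ]; split_ifs <;> first | exact False.elim (by assumption) | omega
  · rw [Finset.sum_congr rfl (fun k _ => show Pf n i.val k * Pf n j.val k
        = (1 * δ k i.val + (-1) * δ k (i.val + 1))
          * (1 * δ k 0 + 1 * δ k (n - 1)) by
      simp only [Pf, if_pos h1, if_neg h2]; ring)]
    rw [sum_two_two 1 (-1) 1 1 _ _ _ _ (by omega) (by omega)]
    simp only [δ]; split_ifs <;> first | exact False.elim (by assumption) | omega
  · rw [Finset.sum_congr rfl (fun k _ => show Pf n i.val k * Pf n j.val k
        = (1 * δ k 0 + 1 * δ k (n - 1))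
          * (1 * δ k j.val + (-1) * δ k (j.val + 1)) by
      simp only [Pf, if_neg h1, if_pos h2]; ring)]
    rw [sum_two_two 1 1 1 (-1) _ _ _ _ (by omega) (by omega)]
    simp only [δ]; split_ifs <;> first | exact False.elim (by assumption) | omega
  · rw [Finset.sum_congr rfl (fun k _ => show Pf n i.val k * Pf n j.val k
        = (1 * δ k 0 + 1 * δ k (n - 1))
          * (1 * δ k 0 + 1 * δ k (n - 1)) by
      simp only [Pf, if_neg h1, if_neg h2]; ring)]
    rw [sum_two_two 1 1 1 1 _ _ _ _ (by omega) (by omega)]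
    simp only [δ]; split_ifs <;> first | exact False.elim (by assumption) | omega

set_option maxHeartbeats 1600000 in
lemma hQQ {n : ℕ} (hn : 4 ≤ n) : QM n * (QM n)ᵀ = CartanD n := by
  ext i j
  have hi := i.isLt
  have hj := j.isLt
  rw [mul_apply]
  simp only [QM, transpose_apply, of_apply]
  rw [show (∑ k : Fin n, Qf i.val k.val * Qf j.val k.val)
      = ∑ k ∈ Finset.range n, Qf i.val k * Qf j.val k from
    Fin.sum_univ_eq_sum_range (fun k => Qf i.val k * Qf j.val k) n]
  simp only [CartanD, Fin.ext_iff]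
  by_cases h1 : i.val = 0 <;> by_cases h2 : j.val = 0
  · rw [Finset.sum_congr rfl (fun k _ => show Qf i.val k * Qf j.val k
        = ((-1) * δ k 0 + (-1) * δ k 1) * ((-1) * δ k 0 + (-1) * δ k 1) by
      simp only [Qf, if_pos h1, if_pos h2]; ring)]
    rw [sum_two_two (-1) (-1) (-1) (-1) _ _ _ _ (by omega) (by omega)]
    simp only [δ]; split_ifs <;> first | exact False.elim (by assumption) | omega
  · rw [Finset.sum_congr rfl (fun k _ => show Qf i.val k * Qf j.val k
        = ((-1) * δ k 0 + (-1) * δ k 1)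
          * (1 * δ k (j.val - 1) + (-1) * δ k j.val) by
      simp only [Qf, if_pos h1, if_neg h2]; ring)]
    rw [sum_two_two (-1) (-1) 1 (-1) _ _ _ _ (by omega) (by omega)]
    simp only [δ]; split_ifs <;> first | exact False.elim (by assumption) | omega
  · rw [Finset.sum_congr rfl (fun k _ => show Qf i.val k * Qf j.val k
        = (1 * δ k (i.val - 1) + (-1) * δ k i.val)
          * ((-1) * δ k 0 + (-1) * δ k 1) by
      simp only [Qf, if_neg h1, if_pos h2]; ring)]
    rw [sum_two_two 1 (-1) (-1) (-1) _ _ _ _ (by omega) (by omega)]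
    simp only [δ]; split_ifs <;> first | exact False.elim (by assumption) | omega
  · rw [Finset.sum_congr rfl (fun k _ => show Qf i.val k * Qf j.val k
        = (1 * δ k (i.val - 1) + (-1) * δ k i.val)
          * (1 * δ k (j.val - 1) + (-1) * δ k j.val) by
      simp only [Qf, if_neg h1, if_neg h2]; ring)]
    rw [sum_two_two 1 (-1) 1 (-1) _ _ _ _ (by omega) (by omega)]
    simp only [δ]; split_ifs <;> first | exact False.elim (by assumption) | omega

set_option maxHeartbeats 1600000 in
lemma hQNP {n : ℕ} (hn : 4 ≤ n) : QM n = (NM n)ᵀ * PM n := by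
  ext j k
  have hj := j.isLt
  have hk := k.isLt
  rw [mul_apply]
  simp only [QM, NM, PM, transpose_apply, of_apply]
  rw [show (∑ a : Fin n, Nf a.val j.val * Pf n a.val k.val)
      = ∑ a ∈ Finset.range n, Nf a j.val * Pf n a k.val from
    Fin.sum_univ_eq_sum_range (fun a => Nf a j.val * Pf n a k.val) n]
  by_cases h1 : j.val = 0
  · rw [Finset.sum_congr rfl (fun a _ => show Nf a j.val * Pf n a k.val
        = δ a 0 * Pf n a k.val - Pf n a k.val by
      simp only [Nf]
      rw [if_pos h1]; ring)]
    rw [Finset.sum_sub_distrib, sum_delta_mul 0 (by omega)]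
    have hsplit : ∑ a ∈ Finset.range n, Pf n a k.val
        = (∑ a ∈ Finset.range (n - 1), Pf n a k.val) + Pf n (n - 1) k.val := by
      rw [← Finset.sum_range_succ, show n - 1 + 1 = n from by omega]
    rw [hsplit, Finset.sum_congr rfl (fun a ha => show Pf n a k.val
        = δ k.val a - δ k.val (a + 1) by
      simp only [Finset.mem_range] at ha
      simp only [Pf, if_pos ha]),
      Finset.sum_range_sub' (fun a => δ k.val a)]
    simp only [Pf, Qf, δ, h1]
    split_ifs <;> first | exact False.elim (by assumption) | omega
  · rw [Finset.sum_congr rfl (fun a _ => show Nf a j.val * Pf n a k.val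
        = δ a (j.val - 1) * Pf n a k.val by
      simp only [Nf, if_neg h1]),
      sum_delta_mul (j.val - 1) (by omega)]
    simp only [Pf, Qf, δ, if_neg h1]
    split_ifs <;> first | exact False.elim (by assumption) | omega

set_option maxHeartbeats 1600000 in
lemma hNN' {n : ℕ} (hn : 4 ≤ n) : NM n * NM' n = 1 := by
  ext a k
  have ha := a.isLt
  have hk := k.isLt
  rw [mul_apply]
  simp only [NM, NM', of_apply]
  rw [show (∑ j : Fin n, Nf a.val j.val * Nf' n j.val k.val)
      = ∑ j ∈ Finset.range n, Nf a.val j * Nf' n j k.val from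
    Fin.sum_univ_eq_sum_range (fun j => Nf a.val j * Nf' n j k.val) n]
  rw [Matrix.one_apply]
  simp only [Fin.ext_iff]
  rcases show a.val = 0 ∨ (1 ≤ a.val ∧ a.val ≤ n - 2) ∨ a.val = n - 1 by omega
    with h | h | h
  · rw [Finset.sum_congr rfl (fun j hj => show Nf a.val j * Nf' n j k.val
        = δ j 1 * Nf' n j k.val by
      simp only [Finset.mem_range] at hj
      congr 1
      simp only [Nf, δ]
      split_ifs <;> first | exact False.elim (by assumption) | omega),
      sum_delta_mul 1 (by omega)]
    simp only [Nf', δ]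
    split_ifs <;> first | exact False.elim (by assumption) | omega
  · rw [Finset.sum_congr rfl (fun j hj => show Nf a.val j * Nf' n j k.val
        = δ j (a.val + 1) * Nf' n j k.val - δ j 0 * Nf' n j k.val by
      simp only [Finset.mem_range] at hj
      rw [← sub_mul]
      congr 1
      simp only [Nf, δ]
      split_ifs <;> first | exact False.elim (by assumption) | omega),
      Finset.sum_sub_distrib, sum_delta_mul (a.val + 1) (by omega),
      sum_delta_mul 0 (by omega)]
    simp only [Nf', δ]
    split_ifs <;> first | exact False.elim (by assumption) | omega
  · rw [Finset.sum_congr rfl (fun j hj => show Nf a.val j * Nf' n j k.val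
        = -(δ j 0 * Nf' n j k.val) by
      simp only [Finset.mem_range] at hj
      rw [← neg_mul]
      congr 1
      simp only [Nf, δ]
      split_ifs <;> first | exact False.elim (by assumption) | omega),
      Finset.sum_neg_distrib, sum_delta_mul 0 (by omega)]
    simp only [Nf', δ]
    split_ifs <;> first | exact False.elim (by assumption) | omega

set_option maxHeartbeats 1600000 in
lemma hN'N {n : ℕ} (hn : 4 ≤ n) : NM' n * NM n = 1 := by
  ext i j
  have hi := i.isLt
  have hj := j.isLt
  rw [mul_apply]
  simp only [NM, NM', of_apply]
  rw [show (∑ k : Fin n, Nf' n i.val k.val * Nf k.val j.val)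
      = ∑ k ∈ Finset.range n, Nf' n i.val k * Nf k j.val from
    Fin.sum_univ_eq_sum_range (fun k => Nf' n i.val k * Nf k j.val) n]
  rw [Matrix.one_apply]
  simp only [Fin.ext_iff]
  rcases show i.val = 0 ∨ i.val = 1 ∨ 2 ≤ i.val by omega with h | h | h
  · rw [Finset.sum_congr rfl (fun k _ => show Nf' n i.val k * Nf k j.val
        = -(δ k (n - 1) * Nf k j.val) by
      rw [← neg_mul]
      congr 1
      simp only [Nf', δ]
      split_ifs <;> first | exact False.elim (by assumption) | omega),
      Finset.sum_neg_distrib, sum_delta_mul (n - 1) (by omega)]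
    simp only [Nf, δ]
    split_ifs <;> first | exact False.elim (by assumption) | omega
  · rw [Finset.sum_congr rfl (fun k _ => show Nf' n i.val k * Nf k j.val
        = δ k 0 * Nf k j.val by
      congr 1
      simp only [Nf', δ]
      split_ifs <;> first | exact False.elim (by assumption) | omega),
      sum_delta_mul 0 (by omega)]
    simp only [Nf, δ]
    split_ifs <;> first | exact False.elim (by assumption) | omega
  · rw [Finset.sum_congr rfl (fun k _ => show Nf' n i.val k * Nf k j.val
        = δ k (i.val - 1) * Nf k j.val - δ k (n - 1) * Nf k j.val by
      rw [← sub_mul]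
      congr 1
      simp only [Nf', δ]
      split_ifs <;> first | exact False.elim (by assumption) | omega),
      Finset.sum_sub_distrib, sum_delta_mul (i.val - 1) (by omega),
      sum_delta_mul (n - 1) (by omega)]
    simp only [Nf, δ]
    split_ifs <;> first | exact False.elim (by assumption) | omega

section Diag

variable {n : ℕ} (ε : Fin n → ℤ)

/-- diagonal sign change. -/
def dd : Fin n → ℤ :=
  fun i => ∏ t ∈ Finset.univ.filter (fun t : Fin n => (t : ℕ) < (i : ℕ)), (-ε t)

lemma dd_sq (hε : ∀ i, ε i = 1 ∨ ε i = -1) (i : Fin n) : dd ε i * dd ε i = 1 := by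
  unfold dd
  rw [← Finset.prod_mul_distrib]
  exact Finset.prod_eq_one fun t _ => by rcases hε t with h | h <;> rw [h] <;> ring

lemma dd_zero {i : Fin n} (hi : (i : ℕ) = 0) : dd ε i = 1 := by
  unfold dd
  rw [Finset.filter_false_of_mem, Finset.prod_empty]
  intro t _
  omega

lemma dd_succ {i j : Fin n} (hij : (j : ℕ) = (i : ℕ) + 1) :
    dd ε j = -ε i * dd ε i := by
  have hset : (Finset.univ.filter fun t : Fin n => (t : ℕ) < (j : ℕ))
      = insert i (Finset.univ.filter fun t : Fin n => (t : ℕ) < (i : ℕ)) := by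
    ext t
    simp only [Finset.mem_filter, Finset.mem_insert, Finset.mem_univ, true_and,
      Fin.ext_iff]
    omega
  unfold dd
  rw [hset, Finset.prod_insert (by simp)]

lemma prod_neg (hε : ∀ i, ε i = 1 ∨ ε i = -1)
    (hodd : Odd (Finset.univ.filter fun i => ε i = 1).card) :
    ∏ t : Fin n, (-ε t) = -1 := by
  rw [← Finset.prod_filter_mul_prod_filter_not Finset.univ (fun i => ε i = 1)]
  have h1 : (∏ t ∈ Finset.univ.filter (fun i => ε i = 1), (-ε t)) =
      (-1 : ℤ) ^ (Finset.univ.filter (fun i => ε i = 1)).card := by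
    rw [← Finset.prod_const]
    exact Finset.prod_congr rfl fun t ht => by
      rw [(Finset.mem_filter.mp ht).2]
  have h2 : (∏ t ∈ Finset.univ.filter (fun i => ¬ ε i = 1), (-ε t)) = 1 :=
    Finset.prod_eq_one fun t ht => by
      rcases hε t with h | h
      · exact absurd h (Finset.mem_filter.mp ht).2
      · rw [h]; norm_num
  rw [h1, h2, mul_one, Odd.neg_one_pow hodd]

lemma dd_last (hε : ∀ i, ε i = 1 ∨ ε i = -1)
    (hodd : Odd (Finset.univ.filter fun i => ε i = 1).card)
    {i : Fin n} (hi : (i : ℕ) = n - 1) : dd ε i * ε i = 1 := by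
  have huniv : (Finset.univ : Finset (Fin n))
      = insert i (Finset.univ.filter fun t : Fin n => (t : ℕ) < (i : ℕ)) := by
    ext t
    have ht := t.isLt
    have hii := i.isLt
    simp only [Finset.mem_univ, Finset.mem_insert, Finset.mem_filter, true_and,
      true_iff, Fin.ext_iff]
    omega
  have hprod : ∏ t : Fin n, (-ε t) = -ε i * dd ε i := by
    rw [huniv, Finset.prod_insert (by simp)]
    rfl
  have h3 := prod_neg ε hε hodd
  have h4 : -(ε i * dd ε i) = -1 := by rw [← neg_mul, ← hprod]; exact h3
  have h5 : ε i * dd ε i = 1 := by linarith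
  linarith [h5, mul_comm (ε i) (dd ε i)]

lemma hDCD (hn : 4 ≤ n) (hε : ∀ i, ε i = 1 ∨ ε i = -1)
    (hodd : Odd (Finset.univ.filter fun i => ε i = 1).card) :
    diagonal (dd ε) * CycM n ε * diagonal (dd ε)
      = CycM n (fun i => if (i : ℕ) = n - 1 then 1 else -1) := by
  ext i j
  have hi := i.isLt
  have hj := j.isLt
  rw [Matrix.mul_diagonal, Matrix.diagonal_mul]
  simp only [CycM, Fin.ext_iff, modsucc hn hi hj, modsucc hn hj hi]
  by_cases h1 : (i : ℕ) = (j : ℕ)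
  · have hij : i = j := Fin.val_injective h1
    subst hij
    rw [if_pos rfl, if_pos rfl]
    have := dd_sq ε hε i
    nlinarith [dd_sq ε hε i]
  · rw [if_neg h1, if_neg h1]
    by_cases h2 : ((j : ℕ) = (i : ℕ) + 1 ∨ ((i : ℕ) = n - 1 ∧ (j : ℕ) = 0))
    · rw [if_pos h2, if_pos h2]
      rcases h2 with h2 | ⟨h2a, h2b⟩
      · rw [if_neg (show ¬(i : ℕ) = n - 1 by omega), dd_succ ε h2]
        have hsq := dd_sq ε hε i
        have hesq : ε i * ε i = 1 := by rcases hε i with h | h <;> rw [h] <;> ring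
        nlinarith [hsq, hesq]
      · rw [if_pos h2a, dd_zero ε h2b, mul_one]
        exact dd_last ε hε hodd h2a
    · rw [if_neg h2, if_neg h2]
      by_cases h3 : ((i : ℕ) = (j : ℕ) + 1 ∨ ((j : ℕ) = n - 1 ∧ (i : ℕ) = 0))
      · rw [if_pos h3, if_pos h3]
        rcases h3 with h3 | ⟨h3a, h3b⟩
        · rw [if_neg (show ¬(j : ℕ) = n - 1 by omega), dd_succ ε h3]
          have hsq := dd_sq ε hε j
          have hesq : ε j * ε j = 1 := by rcases hε j with h | h <;> rw [h] <;> ring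
          nlinarith [hsq, hesq]
        · rw [if_pos h3a, dd_zero ε h3b, one_mul]
          have := dd_last ε hε hodd h3a
          linarith [mul_comm (ε j) (dd ε j), this]
      · rw [if_neg h3, if_neg h3]
        ring

end Diag

end Stmt12Aux

open Stmt12Aux

theorem stmt12 (n : ℕ) (hn : 4 ≤ n) (ε : Fin n → ℤ)
    (hε : ∀ i, ε i = 1 ∨ ε i = -1)
    (hodd : Odd (Finset.univ.filter fun i => ε i = 1).card) :
    ZEquiv (CycM n ε) (CartanD n) := by
  have hDD : diagonal (dd ε) * diagonal (dd ε) = 1 := by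
    have h : (fun i => dd ε i * dd ε i) = (fun _ => (1 : ℤ)) :=
      funext fun i => dd_sq ε hε i
    rw [Matrix.diagonal_mul_diagonal, h]
    ext i j
    simp [Matrix.diagonal, Matrix.one_apply]
  refine ⟨diagonal (dd ε) * NM n, NM' n * diagonal (dd ε), ?_, ?_, ?_⟩
  · rw [mul_assoc, ← mul_assoc (NM n), hNN' hn, one_mul, hDD]
  · rw [mul_assoc, ← mul_assoc (diagonal (dd ε)) (diagonal (dd ε)), hDD, one_mul,
      hN'N hn]
  · have key : (NM n)ᵀ * (diagonal (dd ε) * CycM n ε * diagonal (dd ε)) * NM n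
        = CartanD n := by
      rw [hDCD ε hn hε hodd, ← hPP hn, ← hQQ hn, hQNP hn, Matrix.transpose_mul,
        Matrix.transpose_transpose]
      simp only [Matrix.mul_assoc]
    rw [Matrix.transpose_mul, Matrix.diagonal_transpose, ← key]
    simp only [Matrix.mul_assoc]
end

section
/- Let n ≥ 4 and let ε, ε′ : ℤ/n → {−1, +1} be two sign assignments such that the number of indices i with ε_i = +1 and the number of indices i with ε′_i = +1 have the same parity. Then the cycle quasi-Cartan matrices C(ε) and C(ε′) are ℤ-equivalent. -/
open Matrix

lemma prod_sign_aux (n : ℕ) (f : Fin n → ℤ) (hf : ∀ i, f i = 1 ∨ f i = -1) :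
    ∏ i, f i = (-1 : ℤ) ^ (n - (Finset.univ.filter fun i => f i = 1).card) := by
  classical
  rw [← Finset.prod_filter_mul_prod_filter_not Finset.univ (fun i => f i = 1)]
  rw [Finset.prod_eq_one (fun i hi => (Finset.mem_filter.mp hi).2), one_mul]
  rw [Finset.prod_eq_pow_card (fun i hi => ?_)]
  · congr 1
    have := Finset.card_filter_add_card_filter_not
      (s := (Finset.univ : Finset (Fin n))) (p := fun i => f i = 1)
    simp only [Finset.card_univ, Fintype.card_fin] at this
    omega
  · rcases hf i with h | h
    · exact absurd h (Finset.mem_filter.mp hi).2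
    · exact h

theorem stmt14 (n : ℕ) (hn : 4 ≤ n) (ε ε' : Fin n → ℤ)
    (hε : ∀ i, ε i = 1 ∨ ε i = -1) (hε' : ∀ i, ε' i = 1 ∨ ε' i = -1)
    (hpar : (Finset.univ.filter fun i => ε i = 1).card % 2 =
            (Finset.univ.filter fun i => ε' i = 1).card % 2) :
    ZEquiv (CycM n ε) (CycM n ε') := by
  classical
  set g : ℕ → ℤ := fun m => if h : m < n then ε ⟨m, h⟩ * ε' ⟨m, h⟩ else 1 with hg
  have hg1 : ∀ m, g m * g m = 1 := by
    intro m
    by_cases h : m < n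
    · simp only [hg, dif_pos h]
      rcases hε ⟨m, h⟩ with h1 | h1 <;> rcases hε' ⟨m, h⟩ with h2 | h2 <;>
        rw [h1, h2] <;> ring
    · simp [hg, h]
  have hgdef : ∀ (i : Fin n), g i.val = ε i * ε' i := by
    intro i
    simp [hg, i.isLt]
  set D : ℕ → ℤ := fun m => ∏ j ∈ Finset.range m, g j with hD
  have hDsq : ∀ m, D m * D m = 1 := by
    intro m
    rw [hD]
    simp only
    rw [← Finset.prod_mul_distrib]
    exact Finset.prod_eq_one fun j _ => hg1 j
  have hDn : D n = 1 := by
    have h1 : D n = ∏ i : Fin n, g i.val := (Fin.prod_univ_eq_prod_range g n).symm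
    have h2 : ∏ i : Fin n, g i.val = (∏ i, ε i) * (∏ i, ε' i) := by
      rw [← Finset.prod_mul_distrib]
      exact Finset.prod_congr rfl fun i _ => hgdef i
    rw [h1, h2, prod_sign_aux n ε hε, prod_sign_aux n ε' hε', ← pow_add]
    apply Even.neg_one_pow
    have hk : (Finset.univ.filter fun i => ε i = 1).card ≤ n := by
      simpa using Finset.card_filter_le Finset.univ (fun i => ε i = 1)
    have hk' : (Finset.univ.filter fun i => ε' i = 1).card ≤ n := by
      simpa using Finset.card_filter_le Finset.univ (fun i => ε' i = 1)
    rw [Nat.even_iff]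
    omega
  set d : Fin n → ℤ := fun i => D i.val with hd
  have hdsq : ∀ i, d i * d i = 1 := fun i => hDsq i.val
  have hedge : ∀ i j : Fin n, (j : ℕ) = ((i : ℕ) + 1) % n → d i * d j = ε i * ε' i := by
    intro i j hij
    by_cases h : (i : ℕ) + 1 < n
    · have hj : (j : ℕ) = (i : ℕ) + 1 := by rw [hij, Nat.mod_eq_of_lt h]
      have : d j = d i * g i.val := by
        simp only [hd, hj, hD]
        exact Finset.prod_range_succ g i.val
      rw [this, ← mul_assoc, hdsq i, one_mul, hgdef]
    · have hin : (i : ℕ) + 1 = n := by have := i.isLt; omega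
      have hj0 : (j : ℕ) = 0 := by rw [hij, hin, Nat.mod_self]
      have hdj : d j = 1 := by simp [hd, hD, hj0]
      have hstep : D n = D i.val * g i.val := by
        have : D ((i : ℕ) + 1) = D i.val * g i.val := Finset.prod_range_succ g i.val
        rwa [hin] at this
      have : d i * g i.val = 1 := by rw [hd]; rw [← hstep, hDn]
      have hdi : d i = g i.val := by
        have h2 := congrArg (· * g i.val) this
        simp only [one_mul] at h2
        rw [mul_assoc, hg1] at h2
        simpa using h2
      rw [hdj, mul_one, hdi, hgdef]
  refine ⟨Matrix.diagonal d, Matrix.diagonal d, ?_, ?_, ?_⟩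
  · rw [Matrix.diagonal_mul_diagonal]
    have hfun : (fun i => d i * d i) = fun _ : Fin n => (1 : ℤ) := funext hdsq
    rw [hfun, Matrix.diagonal_one]
  · rw [Matrix.diagonal_mul_diagonal]
    have hfun : (fun i => d i * d i) = fun _ : Fin n => (1 : ℤ) := funext hdsq
    rw [hfun, Matrix.diagonal_one]
  · ext i j
    rw [Matrix.diagonal_transpose, Matrix.mul_diagonal, Matrix.diagonal_mul]
    show CycM n ε' i j = d i * CycM n ε i j * d j
    unfold CycM
    split_ifs with h1 h2 h3
    · subst h1
      have := hdsq i
      nlinarith [hdsq i]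
    · have he := hedge i j h2
      have hεi : ε i * ε i = 1 := by rcases hε i with h | h <;> rw [h] <;> ring
      calc ε' i = (ε i * ε i) * ε' i := by rw [hεi, one_mul]
        _ = ε i * (ε i * ε' i) := by ring
        _ = ε i * (d i * d j) := by rw [he]
        _ = d i * ε i * d j := by ring
    · have he := hedge j i h3
      have hεj : ε j * ε j = 1 := by rcases hε j with h | h <;> rw [h] <;> ring
      calc ε' j = (ε j * ε j) * ε' j := by rw [hεj, one_mul]
        _ = ε j * (ε j * ε' j) := by ring
        _ = ε j * (d j * d i) := by rw [he]
        _ = d i * ε j * d j := by ring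
    · ring
end

section
/- Let A be a symmetric quasi-Cartan matrix indexed by a finite set V with n = |V| elements, and suppose A is ℤ-equivalent to the Cartan matrix of type A_n. Let G_A be the underlying simple graph of A, let x, y be vertices, and let p be a path from x to y in G_A whose length equals the graph distance from x to y. Then every path from x to y in G_A passes through every vertex of p. -/
open Matrix

/-- The underlying simple graph of a symmetric matrix `A`: distinct vertices `i, j` are
adjacent exactly when `A i j ≠ 0` (for symmetric `A`, the symmetrized condition below is
equivalent to `A i j ≠ 0`). -/
def graphOf {V : Type*} (A : Matrix V V ℤ) : SimpleGraph V where
  Adj i j := i ≠ j ∧ A i j ≠ 0 ∧ A j i ≠ 0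
  symm := ⟨fun _ _ h => ⟨Ne.symm h.1, h.2.2, h.2.1⟩⟩
  loopless := ⟨fun _ h => h.1 rfl⟩

/-!
`CartanA n = Dᵀ D`, where the columns of `D` are the simple roots `ε_i - ε_{i+1}` of `ℤ^{n+1}` and
`D` has an integral left inverse. Hence a matrix `A` that is ℤ-equivalent to `CartanA n` is the
Gram matrix `Rᵀ R` of `ℤ`-linearly independent vectors of coordinate sum zero, and `A i i = 2`
forces column `i` of `R` to be `ε_{a i} - ε_{b i}`. Thus `R` is the signed incidence matrix of a
graph `H` on `n + 1` vertices with edges `{a i, b i}`; independence of the columns makes these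
edges distinct and `H` acyclic (a cycle gives a vanishing signed sum of columns), and `G_A` is the
line graph of `H`. In the line graph of a forest, a walk from `x` to `y` must visit every edge of
the unique forest path joining an endpoint of `x` to one of `y`, and these edges, together with
`x` and `y`, already form a walk; so a geodesic visits exactly these vertices.
-/

open Finset SimpleGraph

section

variable {V K : Type*}

theorem Matrix.mulVec_injective_of_mul_eq_one {m n α : Type*} [Fintype m] [Fintype n]
    [DecidableEq n] [Semiring α] {L : Matrix n m α} {R : Matrix m n α} (h : L * R = 1) :
    Function.Injective R.mulVec := fun z w hzw => by
  simpa [mulVec_mulVec, h] using congrArg (L *ᵥ ·) hzw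

theorem Matrix.sum_mul_apply_eq_zero_of_sum_apply_eq_zero {m n l α : Type*} [Fintype m]
    [Fintype n] [NonUnitalNonAssocSemiring α] {D : Matrix m n α} (hD : ∀ j, ∑ k, D k j = 0)
    (N : Matrix n l α) (i : l) : ∑ k, (D * N) k i = 0 := by
  simp [mul_apply, sum_comm (γ := m), ← sum_mul, hD]

theorem exists_eq_single_sub_single [Fintype K] [DecidableEq K] {z : K → ℤ} (h2 : z ⬝ᵥ z = 2)
    (h0 : ∑ k, z k = 0) : ∃ a b, a ≠ b ∧ z = Pi.single a 1 - Pi.single b 1 := by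
  have hle : ∀ k, z k * z k ≤ 2 := fun k =>
    h2 ▸ single_le_sum (fun j _ => mul_self_nonneg (z j)) (mem_univ k)
  have hne : ∃ k ∈ univ, z k ≠ 0 := by
    by_contra! h
    simp [dotProduct, h] at h2
  obtain ⟨a, -, ha⟩ := exists_pos_of_sum_zero_of_exists_nonzero z h0 hne
  obtain ⟨b, -, hb⟩ := exists_pos_of_sum_zero_of_exists_nonzero (s := univ) (-z)
    (by simp [h0]) (by simpa using hne)
  have ha1 : z a = 1 := by nlinarith [hle a]
  have hb1 : z b = -1 := by nlinarith [hle b, Pi.neg_apply z b]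
  have hab : a ≠ b := fun h => by simp [h, hb1] at ha1
  refine ⟨a, b, hab, ?_⟩
  -- `z - (δ_a - δ_b)` has squared norm `2 - 2 (z a - z b) + 2 = 0`.
  rw [← sub_eq_zero, ← dotProduct_self_eq_zero]
  simp [dotProduct_sub, sub_dotProduct, h2, ha1, hb1, hab, hab.symm]

theorem single_sub_single_dotProduct [Fintype K] [DecidableEq K] (a b c d : K) :
    (Pi.single a 1 - Pi.single b 1 : K → ℤ) ⬝ᵥ (Pi.single c 1 - Pi.single d 1) =
      (if a = c then 1 else 0) - (if a = d then 1 else 0) - (if b = c then 1 else 0)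
        + (if b = d then 1 else 0) := by
  simp only [dotProduct_sub, sub_dotProduct, single_dotProduct, Pi.single_apply, one_mul]
  simp only [eq_comm]
  ring

theorem single_sub_single_dotProduct_ne_zero_iff [Fintype K] [DecidableEq K] {a b c d : K}
    (hab : a ≠ b) (hcd : c ≠ d) (h : s(a, b) ≠ s(c, d)) :
    (Pi.single a 1 - Pi.single b 1 : K → ℤ) ⬝ᵥ (Pi.single c 1 - Pi.single d 1) ≠ 0 ↔
      ∃ k, k ∈ s(a, b) ∧ k ∈ s(c, d) := by
  rw [single_sub_single_dotProduct]
  simp only [Sym2.mem_iff, ne_eq, Sym2.eq_iff] at *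
  by_cases a = c <;> by_cases a = d <;> by_cases b = c <;> by_cases b = d <;> simp_all

namespace SimpleGraph

theorem Walk.IsPath.card_support_toFinset [DecidableEq V] {G : SimpleGraph V} {x y : V}
    {p : G.Walk x y} (hp : p.IsPath) : #p.support.toFinset = p.length + 1 := by
  rw [List.toFinset_card_of_nodup hp.support_nodup, Walk.length_support]

theorem dist_add_one_le_card_of_support_subset [DecidableEq V] {G : SimpleGraph V} {x y : V}
    (q : G.Walk x y) {S : Finset V} (hS : ∀ v ∈ q.support, v ∈ S) : G.dist x y + 1 ≤ #S :=
  calc G.dist x y + 1 ≤ q.bypass.length + 1 := by grw [dist_le q.bypass]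
    _ = #q.bypass.support.toFinset := q.bypass_isPath.card_support_toFinset.symm
    _ ≤ #S := card_le_card fun v hv =>
      hS v (q.support_bypass_subset_support (List.mem_toFinset.1 hv))

def lineGraphOfEdges (e : V → Sym2 K) : SimpleGraph V where
  Adj i j := i ≠ j ∧ ∃ k, k ∈ e i ∧ k ∈ e j
  symm := ⟨fun _ _ ⟨h, k, hi, hj⟩ => ⟨h.symm, k, hj, hi⟩⟩
  loopless := ⟨fun _ h => h.1 rfl⟩

variable {e : V → Sym2 K}

theorem exists_walk_lineGraphOfEdges_of_mem {i j : V} {k : K} (hi : k ∈ e i) (hj : k ∈ e j) :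
    ∃ q : (lineGraphOfEdges e).Walk i j, ∀ l ∈ q.support, l = i ∨ l = j := by
  by_cases h : i = j
  · subst h
    exact ⟨.nil, by simp⟩
  · exact ⟨(show (lineGraphOfEdges e).Adj i j from ⟨h, k, hi, hj⟩).toWalk, by simp⟩

theorem exists_walk_fromEdgeSet_of_mem {u v : K} {i : V} (hu : u ∈ e i) (hv : v ∈ e i) :
    ∃ w : (fromEdgeSet (Set.range e)).Walk u v, ∀ d ∈ w.edges, d = e i := by
  by_cases h : u = v
  · subst h
    exact ⟨.nil, by simp⟩
  · have hi : e i = s(u, v) := (Sym2.mem_and_mem_iff h).1 ⟨hu, hv⟩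
    have hadj : (fromEdgeSet (Set.range e)).Adj u v := (fromEdgeSet_adj _).2 ⟨⟨i, hi⟩, h⟩
    exact ⟨hadj.toWalk, by simp [hi]⟩

theorem exists_walk_fromEdgeSet_of_walk {x y : V} (q : (lineGraphOfEdges e).Walk x y) {u v : K}
    (hu : u ∈ e x) (hv : v ∈ e y) :
    ∃ w : (fromEdgeSet (Set.range e)).Walk u v, ∀ d ∈ w.edges, ∃ i ∈ q.support, e i = d := by
  induction q generalizing u with
  | nil =>
    obtain ⟨w, hw⟩ := exists_walk_fromEdgeSet_of_mem hu hv
    exact ⟨w, fun d hd => ⟨_, Walk.start_mem_support _, (hw d hd).symm⟩⟩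
  | cons h q ih =>
    obtain ⟨-, k, hk, hk'⟩ := h
    obtain ⟨w₁, hw₁⟩ := exists_walk_fromEdgeSet_of_mem hu hk
    obtain ⟨w₂, hw₂⟩ := ih hk' hv
    refine ⟨w₁.append w₂, fun d hd => ?_⟩
    rcases List.mem_append.1 (Walk.edges_append w₁ w₂ ▸ hd) with hd | hd
    · exact ⟨_, Walk.start_mem_support _, (hw₁ d hd).symm⟩
    · obtain ⟨i, hi, hid⟩ := hw₂ d hd
      exact ⟨i, List.mem_cons_of_mem _ hi, hid⟩

theorem exists_walk_lineGraphOfEdges_of_walk {u v : K} (w : (fromEdgeSet (Set.range e)).Walk u v)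
    {x y : V} (hx : u ∈ e x) (hy : v ∈ e y) :
    ∃ q : (lineGraphOfEdges e).Walk x y, ∀ i ∈ q.support, i = x ∨ i = y ∨ e i ∈ w.edges := by
  induction w generalizing x with
  | nil =>
    obtain ⟨q, hq⟩ := exists_walk_lineGraphOfEdges_of_mem hx hy
    exact ⟨q, fun i hi => (hq i hi).imp_right Or.inl⟩
  | cons h w ih =>
    obtain ⟨⟨i, hi⟩, -⟩ := (fromEdgeSet_adj _).1 h
    obtain ⟨q₁, hq₁⟩ := exists_walk_lineGraphOfEdges_of_mem hx (hi ▸ Sym2.mem_mk_left _ _)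
    obtain ⟨q₂, hq₂⟩ := ih (hi ▸ Sym2.mem_mk_right _ _) hy
    refine ⟨q₁.append q₂, fun l hl => ?_⟩
    rcases (Walk.mem_support_append_iff _ _).1 hl with hl | hl
    · rcases hq₁ l hl with rfl | rfl
      · exact .inl rfl
      · simp [hi]
    · rcases hq₂ l hl with rfl | rfl | hl
      · simp [hi]
      · exact .inr (.inl rfl)
      · simp [hl]

theorem support_subset_support_of_length_eq_dist [Fintype V] (he : e.Injective)
    (hH : (fromEdgeSet (Set.range e)).IsAcyclic) {x y : V} {p : (lineGraphOfEdges e).Walk x y}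
    (hp : p.length = (lineGraphOfEdges e).dist x y) (q : (lineGraphOfEdges e).Walk x y) :
    p.support ⊆ q.support := by
  classical
  have hu := (e x).out_fst_mem
  have hv := (e y).out_fst_mem
  obtain ⟨w, -⟩ := exists_walk_fromEdgeSet_of_walk p hu hv
  let S : Finset V := insert x (insert y (univ.filter fun i => e i ∈ w.bypass.edges))
  have mem_support_of_mem : ∀ q : (lineGraphOfEdges e).Walk x y, ∀ i ∈ S, i ∈ q.support := by
    intro q i hi
    obtain ⟨w', hw'⟩ := exists_walk_fromEdgeSet_of_walk q hu hv
    have hpath : w.bypass = w'.bypass := congrArg Subtype.val <|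
      (hH.subsingleton_path _ _).elim ⟨_, w.bypass_isPath⟩ ⟨_, w'.bypass_isPath⟩
    simp only [S, mem_insert, mem_filter, mem_univ, true_and] at hi
    rcases hi with rfl | rfl | hi
    · exact q.start_mem_support
    · exact q.end_mem_support
    · obtain ⟨j, hj, hji⟩ := hw' _ (w'.edges_bypass_subset_edges (hpath ▸ hi))
      rwa [he hji] at hj
  have hS : (lineGraphOfEdges e).dist x y + 1 ≤ #S := by
    obtain ⟨q', hq'⟩ := exists_walk_lineGraphOfEdges_of_walk w.bypass hu hv
    exact dist_add_one_le_card_of_support_subset q' fun i hi => by simpa [S] using hq' i hi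
  have hpS : S ⊆ p.support.toFinset := fun i hi => List.mem_toFinset.2 (mem_support_of_mem p i hi)
  have hSp : p.support.toFinset = S := (eq_of_subset_of_card_le hpS <| by
    rw [(p.isPath_of_length_eq_dist hp).card_support_toFinset]; omega).symm
  exact fun i hi => mem_support_of_mem q i (hSp ▸ List.mem_toFinset.2 hi)

end SimpleGraph

def orientedIncMatrix [DecidableEq K] (a b : V → K) : Matrix K V ℤ :=
  of fun k i => (Pi.single (a i) 1 - Pi.single (b i) 1 : K → ℤ) k

section orientedIncMatrix

variable [DecidableEq K] {a b : V → K}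

theorem transpose_mul_orientedIncMatrix_apply [Fintype K] (i j : V) :
    ((orientedIncMatrix a b)ᵀ * orientedIncMatrix a b) i j =
      (Pi.single (a i) 1 - Pi.single (b i) 1 : K → ℤ) ⬝ᵥ
        (Pi.single (a j) 1 - Pi.single (b j) 1) :=
  rfl

theorem mul_orientedIncMatrix_apply {W : Type*} [Fintype K] (L : Matrix W K ℤ) (w : W) (i : V) :
    (L * orientedIncMatrix a b) w i = L w (a i) - L w (b i) := by
  simp [mul_apply, orientedIncMatrix, mul_sub, Pi.single_apply]

theorem graphOf_transpose_mul_orientedIncMatrix [Fintype K] (hab : ∀ i, a i ≠ b i)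
    (he : Function.Injective fun i => s(a i, b i)) :
    graphOf ((orientedIncMatrix a b)ᵀ * orientedIncMatrix a b) =
      lineGraphOfEdges fun i => s(a i, b i) := by
  ext i j
  by_cases hij : i = j
  · simp [hij]
  have hne (i j : V) (hij : i ≠ j) :=
    single_sub_single_dotProduct_ne_zero_iff (hab i) (hab j) (he.ne hij)
  simp only [graphOf, lineGraphOfEdges, transpose_mul_orientedIncMatrix_apply, hne i j hij,
    hne j i (Ne.symm hij)]
  exact ⟨fun h => ⟨h.1, h.2.1⟩, fun ⟨h, k, hk⟩ => ⟨h, ⟨k, hk⟩, k, hk.2, hk.1⟩⟩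

variable [Fintype V] [DecidableEq V]

theorem exists_orientedIncMatrix_mulVec_single {i : V} {u v : K} (h : s(a i, b i) = s(u, v)) :
    ∃ c : ℤ, c ≠ 0 ∧ orientedIncMatrix a b *ᵥ Pi.single i c = Pi.single u 1 - Pi.single v 1 := by
  rcases Sym2.eq_iff.1 h with ⟨rfl, rfl⟩ | ⟨rfl, rfl⟩
  · exact ⟨1, one_ne_zero, by ext; simp [orientedIncMatrix]⟩
  · exact ⟨-1, by simp, by ext; simp [orientedIncMatrix]⟩

theorem exists_orientedIncMatrix_mulVec_eq_of_walk {u v : K}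
    (w : (fromEdgeSet (Set.range fun i => s(a i, b i))).Walk u v) :
    ∃ z : V → ℤ, orientedIncMatrix a b *ᵥ z = Pi.single u 1 - Pi.single v 1 ∧
      ∀ i, s(a i, b i) ∉ w.edges → z i = 0 := by
  induction w with
  | nil => exact ⟨0, by simp, fun _ _ => rfl⟩
  | cons h w ih =>
    obtain ⟨z, hz, hz0⟩ := ih
    obtain ⟨⟨i, hi⟩, -⟩ := (fromEdgeSet_adj _).1 h
    obtain ⟨c, -, hc⟩ := exists_orientedIncMatrix_mulVec_single hi
    refine ⟨Pi.single i c + z, by rw [mulVec_add, hc, hz]; abel, fun j hj => ?_⟩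
    rw [Walk.edges_cons, List.mem_cons, not_or] at hj
    have hji : j ≠ i := by
      rintro rfl
      exact hj.1 hi
    simp [hji, hz0 j hj.2]

theorem isAcyclic_of_injective_orientedIncMatrix_mulVec
    (hR : Function.Injective (orientedIncMatrix a b).mulVec) :
    (fromEdgeSet (Set.range fun i => s(a i, b i))).IsAcyclic := by
  rintro u (_ | ⟨h, w⟩) hcyc
  · exact hcyc.ne_nil rfl
  rw [Walk.cons_isCycle_iff] at hcyc
  obtain ⟨⟨i, hi⟩, -⟩ := (fromEdgeSet_adj _).1 h
  obtain ⟨c, hc, hci⟩ := exists_orientedIncMatrix_mulVec_single hi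
  obtain ⟨z, hz, hz0⟩ := exists_orientedIncMatrix_mulVec_eq_of_walk w
  have hzero : Pi.single i c + z = 0 := hR (by rw [mulVec_add, hci, hz, mulVec_zero]; abel)
  have hzi : z i = 0 := hz0 i fun h => hcyc.2 (hi ▸ h)
  have := congrFun hzero i
  simp [hzi] at this
  exact hc this

theorem injective_sym2_of_injective_orientedIncMatrix_mulVec
    (hR : Function.Injective (orientedIncMatrix a b).mulVec) :
    Function.Injective fun i => s(a i, b i) := by
  intro i j hij
  obtain ⟨c, hc, hci⟩ := exists_orientedIncMatrix_mulVec_single (a := a) (b := b) (i := i) rfl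
  obtain ⟨d, -, hdj⟩ := exists_orientedIncMatrix_mulVec_single hij.symm
  have := congrFun (hR (hci.trans hdj.symm)) i
  by_contra hne
  simp [hne] at this
  exact hc this

end orientedIncMatrix

def cartanRoots (n : ℕ) : Matrix (Fin (n + 1)) (Fin n) ℤ :=
  orientedIncMatrix Fin.castSucc Fin.succ

theorem cartanA_eq_transpose_mul (n : ℕ) : CartanA n = (cartanRoots n)ᵀ * cartanRoots n := by
  ext i j
  rw [cartanRoots, transpose_mul_orientedIncMatrix_apply, single_sub_single_dotProduct, CartanA]
  simp only [Fin.ext_iff, Fin.val_castSucc, Fin.val_succ]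
  split_ifs <;> omega

def cartanRootsLeftInv (n : ℕ) : Matrix (Fin n) (Fin (n + 1)) ℤ :=
  of fun i k => if k ≤ i.castSucc then 1 else 0

theorem cartanRootsLeftInv_mul (n : ℕ) : cartanRootsLeftInv n * cartanRoots n = 1 := by
  ext i j
  simp only [cartanRoots, mul_orientedIncMatrix_apply, cartanRootsLeftInv, of_apply, one_apply,
    Fin.le_def, Fin.ext_iff, Fin.val_castSucc, Fin.val_succ]
  split_ifs <;> omega

theorem sum_cartanRoots_col (n : ℕ) (i : Fin n) : ∑ k, cartanRoots n k i = 0 := by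
  simp [cartanRoots, orientedIncMatrix, Pi.single_apply]

theorem ZEquiv.exists_eq_transpose_mul_self {W : Type*} [Fintype V] [DecidableEq V] [Fintype W]
    [DecidableEq W] [Fintype K] (e : V ≃ W) {A : Matrix V V ℤ} {D : Matrix K W ℤ}
    (hA : ZEquiv (reindex e e A) (Dᵀ * D)) :
    ∃ (M : Matrix V W ℤ) (N : Matrix W V ℤ), M * N = 1 ∧ A = (D * N)ᵀ * (D * N) := by
  obtain ⟨M, N, hMN, -, hD⟩ := hA
  refine ⟨M.submatrix e id, N.submatrix id e, ?_, ?_⟩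
  · rw [← submatrix_mul _ _ _ _ _ Function.bijective_id, hMN, submatrix_one_equiv]
  have hA : reindex e e A = (D * N)ᵀ * (D * N) := by
    rw [transpose_mul, Matrix.mul_assoc, ← Matrix.mul_assoc Dᵀ, hD]
    simp only [Matrix.mul_assoc, hMN, Matrix.mul_one]
    rw [← Matrix.mul_assoc, ← transpose_mul, hMN, transpose_one, Matrix.one_mul]
  rw [← submatrix_id_id D, ← submatrix_mul _ _ _ _ _ Function.bijective_id, transpose_submatrix,
    ← submatrix_mul _ _ _ _ _ Function.bijective_id, ← hA]
  ext
  simp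

theorem exists_eq_transpose_mul_self_of_zEquiv_cartanA {n : ℕ} [Fintype V] [DecidableEq V]
    (e : V ≃ Fin n) {A : Matrix V V ℤ} (hA : ZEquiv (reindex e e A) (CartanA n)) :
    ∃ R : Matrix (Fin (n + 1)) V ℤ,
      Function.Injective R.mulVec ∧ (∀ i, ∑ k, R k i = 0) ∧ A = Rᵀ * R := by
  rw [cartanA_eq_transpose_mul] at hA
  obtain ⟨M, N, hMN, hA⟩ := hA.exists_eq_transpose_mul_self e
  refine ⟨_, mulVec_injective_of_mul_eq_one (L := M * cartanRootsLeftInv n) ?_,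
    sum_mul_apply_eq_zero_of_sum_apply_eq_zero (sum_cartanRoots_col n) N, hA⟩
  rw [Matrix.mul_assoc, ← Matrix.mul_assoc _ (cartanRoots n), cartanRootsLeftInv_mul,
    Matrix.one_mul, hMN]

end

theorem stmt16_general (n : ℕ) (V : Type*) [Fintype V] [DecidableEq V]
    (A : Matrix V V ℤ) (hdiag : ∀ i, A i i = 2)
    (e : V ≃ Fin n) (hA : ZEquiv ((Matrix.reindex e e) A) (CartanA n))
    (x y : V) (p : (graphOf A).Walk x y)
    (hlen : p.length = (graphOf A).dist x y) :
    ∀ q : (graphOf A).Walk x y, q.IsPath → ∀ w ∈ p.support, w ∈ q.support := by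
  obtain ⟨R, hR, hRsum, rfl⟩ := exists_eq_transpose_mul_self_of_zEquiv_cartanA e hA
  choose a b hab hcol using fun i => exists_eq_single_sub_single (hdiag i) (hRsum i)
  obtain rfl : R = orientedIncMatrix a b := by
    ext k i
    exact congrFun (hcol i) k
  have he := injective_sym2_of_injective_orientedIncMatrix_mulVec hR
  revert p
  rw [graphOf_transpose_mul_orientedIncMatrix hab he]
  exact fun p hlen q _ => support_subset_support_of_length_eq_dist he
    (isAcyclic_of_injective_orientedIncMatrix_mulVec hR) hlen q

theorem stmt16 (n : ℕ) (V : Type*) [Fintype V] [DecidableEq V]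
    (A : Matrix V V ℤ) (hsym : A.IsSymm) (hdiag : ∀ i, A i i = 2)
    (e : V ≃ Fin n) (hA : ZEquiv ((Matrix.reindex e e) A) (CartanA n))
    (x y : V) (p : (graphOf A).Walk x y) (hp : p.IsPath)
    (hlen : p.length = (graphOf A).dist x y) :
    ∀ q : (graphOf A).Walk x y, q.IsPath → ∀ w ∈ p.support, w ∈ q.support :=
  stmt16_general n V A hdiag e hA x y p hlen
end

section
/- For every finite nonempty set V and every subset X ⊆ V, the F-matrix F[X, V ∖ X] is positive definite. -/
open Matrix

theorem stmt18 (V : Type*) [Fintype V] [DecidableEq V] [Nonempty V] (X : Finset V) :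
    PosDefInt (Fmat X) := by
  intro x hx
  set s : V → ℤ := fun i => if i ∈ X then 1 else -1 with hs
  have key : x ⬝ᵥ (Fmat X *ᵥ x)
      = (∑ i, s i * x i) * (∑ i, s i * x i) + ∑ i, x i * x i := by
    rw [Finset.sum_mul_sum]
    simp only [dotProduct, mulVec, dotProduct, Finset.mul_sum]
    rw [← Finset.sum_add_distrib]
    refine Finset.sum_congr rfl fun i _ => ?_
    have : x i * x i = ∑ j, if i = j then x i * x j else 0 := by
      simp
    rw [this, ← Finset.sum_add_distrib]
    refine Finset.sum_congr rfl fun j _ => ?_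
    simp only [Fmat, hs]
    by_cases h : i = j
    · subst h
      by_cases hi : i ∈ X <;> simp [hi] <;> ring
    · simp only [h, if_false]
      by_cases hij : (i ∈ X ↔ j ∈ X)
      · rcases hij with ⟨h1, h2⟩
        by_cases hi : i ∈ X <;> by_cases hj : j ∈ X <;>
          simp_all <;> ring
      · by_cases hi : i ∈ X <;> by_cases hj : j ∈ X <;>
          simp_all <;> ring
  rw [key]
  have h1 : 0 ≤ (∑ i, s i * x i) * (∑ i, s i * x i) := mul_self_nonneg _
  have h2 : 0 < ∑ i, x i * x i := by
    obtain ⟨i, hi⟩ : ∃ i, x i ≠ 0 := by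
      by_contra h
      push_neg at h
      exact hx (funext h)
    refine Finset.sum_pos' (fun j _ => mul_self_nonneg _) ⟨i, Finset.mem_univ i, ?_⟩
    exact mul_self_pos.mpr hi
  omega
end

section
/- Let n ≥ 4 and let ε : ℤ/n → {−1, +1} be a sign assignment such that the number of indices i with ε_i = +1 is odd. Then the cycle quasi-Cartan matrix C(ε) is positive definite. -/
open Matrix

/-!
For `ε i = ±1` the quadratic form of `C(ε)` is a sum of squares,
`xᵀ C(ε) x = ∑ᵢ (xᵢ + εᵢ xᵢ₊₁)²`. If it vanishes, then `xᵢ₊₁ = -εᵢ xᵢ` all around the cycle,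
so `x₀ = (∏ᵢ -εᵢ) x₀`; an odd number of `εᵢ = 1` makes this product `-1`, forcing `x = 0`.
-/

open Finset

namespace Fin

variable {n : ℕ} [NeZero n]

lemma val_add_one_eq_mod (hn : 2 ≤ n) (i : Fin n) :
    ((i + 1 : Fin n) : ℕ) = ((i : ℕ) + 1) % n := by
  rw [Fin.val_add, Fin.val_one', Nat.mod_eq_of_lt (by omega : 1 < n)]

lemma add_one_ne_self (hn : 2 ≤ n) (i : Fin n) : i + 1 ≠ i := by
  rw [Ne, add_eq_left, Fin.ext_iff, Fin.val_one', Nat.mod_eq_of_lt (by omega)]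
  simp

lemma add_one_add_one_ne_self (hn : 3 ≤ n) (i : Fin n) : i + 1 + 1 ≠ i := by
  rw [Ne, add_assoc, add_eq_left, Fin.ext_iff, Fin.val_add, Fin.val_one',
    Nat.mod_eq_of_lt (by omega : 1 < n)]
  simp [Nat.mod_eq_of_lt (by omega : 2 < n)]

end Fin

section CycleMatrix

variable {n : ℕ} [NeZero n]

def cycShift (ε : Fin n → ℤ) : Matrix (Fin n) (Fin n) ℤ :=
  Matrix.of fun i j => if j = i + 1 then ε i else 0

lemma CycM_eq_cycShift (hn : 3 ≤ n) (ε : Fin n → ℤ) :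
    CycM n ε = 2 • 1 + cycShift ε + (cycShift ε)ᵀ := by
  ext i j
  have hsucc (a b : Fin n) : ((b : ℕ) = ((a : ℕ) + 1) % n) = (b = a + 1) := by
    rw [Fin.ext_iff, Fin.val_add_one_eq_mod (by omega)]
  have hne₁ (a : Fin n) : (a = a + 1) = False := eq_false (Fin.add_one_ne_self (by omega) a).symm
  have hne₂ (a : Fin n) : (a = a + 1 + 1) = False :=
    eq_false (Fin.add_one_add_one_ne_self hn a).symm
  simp only [CycM, cycShift, hsucc, Matrix.add_apply, Matrix.smul_apply, one_apply,
    transpose_apply, of_apply]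
  split_ifs <;> subst_vars <;> simp [hne₁, hne₂] at *

lemma dotProduct_cycShift_mulVec (ε x : Fin n → ℤ) :
    x ⬝ᵥ (cycShift ε *ᵥ x) = ∑ i, ε i * x i * x (i + 1) := by
  simp only [dotProduct, mulVec, cycShift, of_apply, ite_mul, zero_mul, sum_ite_eq',
    mem_univ, if_true]
  exact sum_congr rfl fun i _ => by ring

lemma dotProduct_CycM_mulVec (hn : 3 ≤ n) (ε : Fin n → ℤ) (hε : ∀ i, ε i = 1 ∨ ε i = -1)
    (x : Fin n → ℤ) : x ⬝ᵥ (CycM n ε *ᵥ x) = ∑ i, (x i + ε i * x (i + 1)) ^ 2 := by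
  have hshift : ∑ i, x (i + 1) ^ 2 = ∑ i, x i ^ 2 :=
    Equiv.sum_comp (Equiv.addRight (1 : Fin n)) fun i => x i ^ 2
  have hsq (i : Fin n) : ε i ^ 2 = 1 := by rcases hε i with h | h <;> simp [h]
  calc x ⬝ᵥ (CycM n ε *ᵥ x)
      = 2 * (x ⬝ᵥ x) + 2 * (x ⬝ᵥ (cycShift ε *ᵥ x)) := by
        rw [CycM_eq_cycShift hn, add_mulVec, add_mulVec, dotProduct_add, dotProduct_add,
          smul_mulVec, one_mulVec, dotProduct_smul, dotProduct_mulVec x (cycShift ε)ᵀ,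
          vecMul_transpose, dotProduct_comm (cycShift ε *ᵥ x) x, nsmul_eq_mul]
        push_cast
        ring
    _ = ∑ i, x i ^ 2 + 2 * ∑ i, ε i * x i * x (i + 1) + ∑ i, x (i + 1) ^ 2 := by
        rw [dotProduct_cycShift_mulVec, hshift, dotProduct]
        simp only [← sq]
        ring
    _ = ∑ i, (x i + ε i * x (i + 1)) ^ 2 := by
        rw [mul_sum, ← sum_add_distrib, ← sum_add_distrib]
        exact sum_congr rfl fun i _ => by linear_combination -x (i + 1) ^ 2 * hsq i

end CycleMatrix

lemma prod_neg_eq_neg_one_pow_card_filter {ι R : Type*} [CommRing R] [DecidableEq R]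
    (s : Finset ι) (ε : ι → R) (hε : ∀ i ∈ s, ε i = 1 ∨ ε i = -1) :
    ∏ i ∈ s, -ε i = (-1) ^ #(s.filter fun i => ε i = 1) := by
  have hsign : ∀ i ∈ s, -ε i = if ε i = 1 then -1 else 1 := fun i hi => by
    by_cases h1 : ε i = 1
    · rw [if_pos h1, h1]
    · rw [if_neg h1, (hε i hi).resolve_left h1, neg_neg]
  rw [prod_congr rfl hsign, prod_ite, prod_const, prod_const_one, mul_one]

open Fin.NatCast in
lemma eq_zero_of_cyclic_recurrence {n : ℕ} [NeZero n] {R : Type*} [CommRing R] [IsDomain R]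
    (c x : Fin n → R) (hrec : ∀ i, x (i + 1) = c i * x i) (hc : ∏ i, c i ≠ 1) : x = 0 := by
  have hprod : ∏ i, x i = (∏ i, c i) * ∏ i, x i := by
    rw [← prod_mul_distrib, ← Equiv.prod_comp (Equiv.addRight (1 : Fin n)) x]
    exact prod_congr rfl fun i _ => hrec i
  obtain ⟨k, -, hk⟩ : ∃ k ∈ univ, x k = 0 := by
    rw [← prod_eq_zero_iff]
    have : (1 - ∏ i, c i) * ∏ i, x i = 0 := by linear_combination hprod
    exact (mul_eq_zero.1 this).resolve_left (sub_ne_zero.2 hc.symm)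
  have hpropagate (m : ℕ) : x (k + m) = 0 := by
    induction m with
    | zero => simpa using hk
    | succ m ih => rw [Nat.cast_succ, ← add_assoc, hrec, ih, mul_zero]
  funext j
  simpa using hpropagate (j - k).val

theorem stmt19 (n : ℕ) (hn : 4 ≤ n) (ε : Fin n → ℤ)
    (hε : ∀ i, ε i = 1 ∨ ε i = -1)
    (hodd : Odd (Finset.univ.filter fun i => ε i = 1).card) :
    PosDefInt (CycM n ε) := by
  have : NeZero n := ⟨by omega⟩
  intro x hx
  rw [dotProduct_CycM_mulVec (by omega) ε hε x]
  have hterms_nonneg : ∀ i ∈ univ, 0 ≤ (x i + ε i * x (i + 1)) ^ 2 := fun i _ => sq_nonneg _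
  refine (sum_nonneg hterms_nonneg).lt_of_ne fun hzero => hx ?_
  have hrec (i : Fin n) : x (i + 1) = -ε i * x i := by
    have hi : x i + ε i * x (i + 1) = 0 :=
      pow_eq_zero_iff two_ne_zero |>.1 <|
        (sum_eq_zero_iff_of_nonneg hterms_nonneg).1 hzero.symm i (mem_univ i)
    rcases hε i with h | h <;> rw [h] at hi ⊢ <;> linarith
  refine eq_zero_of_cyclic_recurrence (fun i => -ε i) x hrec ?_
  rw [prod_neg_eq_neg_one_pow_card_filter univ ε fun i _ => hε i, hodd.neg_one_pow]
  decide
end
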